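/- arXiv:2510.22385 — 5 statements merged into one kernel-verified Lean document; each statement's English description precedes it below -/
import Mathlib

section
/- The number of trees on the vertex set {0,1,...,n} equals (n+1)^(n-1) for all n ≥ 1 (Cayley's formula). -/
/-!
Orient every edge of a tree on `V` towards a root `r`: the tree becomes the graph of its parent
map `f`, which fixes `r` and sends every vertex to `r` after finitely many steps, and every such
map arises from exactly one tree.

More generally, call `f : V → V` a parent map with root set `R` if it fixes `R` pointwise and
every orbit reaches `R`; these are the rooted forests on `V` with root set `R`, and there are
`k n^(n-k-1)` of them when `n = |V|` and `k = |R| < n`. Induct on `n`: deleting the roots, the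
non-roots `C` whose parent lies in `R` become the roots of a parent map on the remaining `a = n - k`
vertices. Hence the count is `∑_C k^|C| |C| a^(a-|C|-1)`, which the derivative of the binomial
theorem evaluates to `k (k + a)^(a-1)`.
-/

open Function Finset SimpleGraph

variable {V : Type*}

def IsParentMap (R : Set V) (f : V → V) : Prop :=
  (∀ v ∈ R, f v = v) ∧ ∀ v, ∃ k, f^[k] v ∈ R

def parentGraph (f : V → V) : SimpleGraph V :=
  SimpleGraph.fromRel fun v w => f v = w

section Trees

variable {r : V} {f : V → V}

theorem isParentMap_singleton_iff :
    IsParentMap {r} f ↔ f r = r ∧ ∃ μ : V → ℕ, ∀ v ≠ r, μ (f v) < μ v := by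
  classical
  simp only [IsParentMap, Set.mem_singleton_iff, forall_eq]
  refine and_congr_right fun _ => ⟨fun h => ⟨fun v => Nat.find (h v), fun v hv => ?_⟩, ?_⟩
  · have hfind := Nat.find_spec (h v)
    obtain ⟨k, hk⟩ := Nat.exists_eq_add_one_of_ne_zero (n := Nat.find (h v)) fun h0 =>
      hv (by rwa [h0] at hfind)
    rw [hk, iterate_succ_apply] at hfind
    exact (Nat.find_le hfind).trans_lt (by beta_reduce; omega)
  · rintro ⟨μ, hμ⟩ v
    induction hv : μ v using Nat.strong_induction_on generalizing v with
    | _ n ih =>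
      by_cases hvr : v = r
      · exact ⟨0, hvr⟩
      · obtain ⟨k, hk⟩ := ih _ (hv ▸ hμ v hvr) (f v) rfl
        exact ⟨k + 1, hk⟩

theorem parentGraph_adj {v w : V} : (parentGraph f).Adj v w ↔ v ≠ w ∧ (f v = w ∨ f w = v) :=
  fromRel_adj _ v w

theorem IsParentMap.connected_parentGraph (hf : IsParentMap {r} f) :
    (parentGraph f).Connected := by
  have reachable : ∀ k v, f^[k] v = r → (parentGraph f).Reachable v r := by
    intro k
    induction k with
    | zero => rintro v rfl; rfl
    | succ k ih =>
      intro v hv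
      refine Reachable.trans ?_ (ih (f v) hv)
      by_cases hfv : v = f v
      · rw [← hfv]
      · exact (parentGraph_adj.mpr ⟨hfv, .inl rfl⟩).reachable
  have : Nonempty V := ⟨r⟩
  exact ⟨fun v w => ((hf.2 v).elim fun k hk => reachable k v hk).trans
    ((hf.2 w).elim fun k hk => reachable k w hk).symm⟩

theorem eq_of_parentGraph_adj_of_le (hr : f r = r) {μ : V → ℕ} (hμ : ∀ v ≠ r, μ (f v) < μ v)
    {v w : V} (hvw : (parentGraph f).Adj v w) (hle : μ w ≤ μ v) : f v = w := by
  obtain ⟨hne, h | h⟩ := parentGraph_adj.mp hvw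
  · exact h
  · have hwr : w ≠ r := by rintro rfl; exact hne (h ▸ hr)
    exact absurd (h ▸ hμ w hwr) hle.not_gt

theorem parentGraph_isAcyclic (hr : f r = r) {μ : V → ℕ} (hμ : ∀ v ≠ r, μ (f v) < μ v) :
    (parentGraph f).IsAcyclic := by
  classical
  intro u c hc
  -- Both cycle-neighbours of a vertex of maximal rank on the cycle would be its parent.
  obtain ⟨m, hm, hmax⟩ := c.support.toFinset.exists_max_image μ
    ⟨u, List.mem_toFinset.mpr c.start_mem_support⟩
  rw [List.mem_toFinset] at hm
  set c' := c.rotate m hm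
  have hc' : c'.IsCycle := hc.rotate hm
  have parent_eq : ∀ w ∈ c'.support, (parentGraph f).Adj m w → f m = w := fun w hw hadj =>
    eq_of_parentGraph_adj_of_le hr hμ hadj
      (hmax w (List.mem_toFinset.mpr ((c.mem_support_rotate_iff m hm).mp hw)))
  exact hc'.snd_ne_penultimate <|
    (parent_eq _ (c'.getVert_mem_support 1) (c'.adj_snd hc'.not_nil)).symm.trans
      (parent_eq _ (c'.getVert_mem_support _) (c'.adj_penultimate hc'.not_nil).symm)

theorem IsParentMap.isTree_parentGraph (hf : IsParentMap {r} f) : (parentGraph f).IsTree := by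
  obtain ⟨hr, μ, hμ⟩ := isParentMap_singleton_iff.mp hf
  exact ⟨hf.connected_parentGraph, parentGraph_isAcyclic hr hμ⟩

theorem parentGraph_injOn : Set.InjOn (parentGraph (V := V)) {f | IsParentMap {r} f} := by
  intro f hf g hg hfg
  obtain ⟨hfr, μ, hμ⟩ := isParentMap_singleton_iff.mp hf
  have hgr : g r = r := hg.1 r rfl
  funext v
  induction hv : μ v using Nat.strong_induction_on generalizing v with
  | _ n ih =>
    by_cases hvr : v = r
    · rw [hvr, hfr, hgr]
    have hadj : (parentGraph g).Adj v (f v) :=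
      hfg ▸ parentGraph_adj.mpr ⟨fun h => (hμ v hvr).ne (congrArg μ h).symm, .inl rfl⟩
    obtain ⟨-, h | h⟩ := parentGraph_adj.mp hadj
    · exact h.symm
    have hfvr : f v ≠ r := by rintro hfv; rw [hfv, hgr] at h; exact hvr h.symm
    have hffv : f (f v) = v := (ih _ (hv ▸ hμ v hvr) (f v) rfl).trans h
    exact absurd (hffv ▸ (hμ _ hfvr).trans (hμ v hvr)) (lt_irrefl _)

theorem SimpleGraph.Connected.exists_isParentMap_parentGraph_le {G : SimpleGraph V}
    (hG : G.Connected) (r : V) : ∃ f, IsParentMap {r} f ∧ parentGraph f ≤ G := by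
  classical
  have step : ∀ v ≠ r, ∃ w, G.Adj v w ∧ G.dist w r < G.dist v r := by
    intro v hv
    obtain ⟨p, -, hp⟩ := hG.exists_path_of_dist v r
    have hnil : ¬p.Nil := Walk.not_nil_of_ne hv
    have := G.dist_le p.tail
    have := Walk.length_tail_add_one hnil
    exact ⟨p.snd, p.adj_snd hnil, by omega⟩
  choose! par hpar using step
  refine ⟨fun v => if v = r then r else par v, isParentMap_singleton_iff.mpr
    ⟨if_pos rfl, fun v => G.dist v r, fun v hv => ?_⟩, fun v w hvw => ?_⟩
  · simpa [hv] using (hpar v hv).2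
  · obtain ⟨hne, h | h⟩ := parentGraph_adj.mp hvw
    · have hvr : v ≠ r := by rintro rfl; simp_all
      simpa [hvr, ← h] using (hpar v hvr).1
    · have hwr : w ≠ r := by rintro rfl; simp_all
      simpa [hwr, ← h] using (hpar w hwr).1.symm

theorem card_isTree_eq_card_isParentMap (r : V) :
    Nat.card {G : SimpleGraph V // G.IsTree} = Nat.card {f : V → V // IsParentMap {r} f} := by
  refine (Nat.card_congr (Equiv.ofBijective (fun f => ⟨parentGraph f.1, f.2.isTree_parentGraph⟩)
    ⟨fun f g h => Subtype.ext (parentGraph_injOn f.2 g.2 (congrArg Subtype.val h)), ?_⟩)).symm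
  rintro ⟨G, hG⟩
  obtain ⟨f, hf, hle⟩ := hG.connected.exists_isParentMap_parentGraph_le r
  exact ⟨⟨f, hf⟩, Subtype.ext
    ((isTree_iff_minimal_connected.mp hG).eq_of_le hf.connected_parentGraph hle)⟩

end Trees

theorem card_isParentMap_univ : Nat.card {f : V → V // IsParentMap Set.univ f} = 1 :=
  Nat.card_eq_one_iff_exists.mpr ⟨⟨id, fun _ _ => rfl, fun v => ⟨0, Set.mem_univ v⟩⟩,
    fun f => Subtype.ext (funext fun v => f.2.1 v (Set.mem_univ v))⟩

instance isEmpty_isParentMap_empty [Nonempty V] : IsEmpty {f : V → V // IsParentMap ∅ f} :=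
  ⟨fun f => (f.2.2 (Classical.arbitrary V)).elim fun _ => id⟩

namespace ParentMap

variable [DecidableEq V] {R : Finset V}

def contract (R : Finset V) (f : V → V) (v : {v // v ∉ R}) : {v // v ∉ R} :=
  if h : f v ∈ R then v else ⟨f v, h⟩

def glue (C : Finset {v // v ∉ R}) (p : C → R) (g : {v // v ∉ R} → {v // v ∉ R}) (v : V) : V :=
  if hv : v ∈ R then v else if hc : ⟨v, hv⟩ ∈ C then p ⟨_, hc⟩ else g ⟨v, hv⟩

variable {f : V → V} {C : Finset {v // v ∉ R}} {p : C → R} {g : {v // v ∉ R} → {v // v ∉ R}}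

theorem contract_of_mem {v : {v // v ∉ R}} (h : f v ∈ R) : contract R f v = v := dif_pos h

theorem contract_of_notMem {v : {v // v ∉ R}} (h : f v ∉ R) : contract R f v = ⟨f v, h⟩ :=
  dif_neg h

theorem glue_of_mem {v : V} (hv : v ∈ R) : glue C p g v = v := dif_pos hv

theorem glue_of_notMem_of_mem {v : V} (hv : v ∉ R) (hc : ⟨v, hv⟩ ∈ C) :
    glue C p g v = p ⟨_, hc⟩ := by
  simp [glue, hv, hc]

theorem glue_of_notMem_of_notMem {v : V} (hv : v ∉ R) (hc : ⟨v, hv⟩ ∉ C) :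
    glue C p g v = g ⟨v, hv⟩ := by
  simp [glue, hv, hc]

theorem exists_iterate_glue_mem (hg : ∀ v, ∃ m, g^[m] v ∈ C) (v : V) :
    ∃ k, (glue C p g)^[k] v ∈ R := by
  by_cases hv : v ∈ R
  · exact ⟨0, hv⟩
  obtain ⟨m, hm⟩ := hg ⟨v, hv⟩
  induction m generalizing v with
  | zero => exact ⟨1, by rw [iterate_one, glue_of_notMem_of_mem hv hm]; exact (p _).2⟩
  | succ m ih =>
    by_cases hc : ⟨v, hv⟩ ∈ C
    · exact ⟨1, by rw [iterate_one, glue_of_notMem_of_mem hv hc]; exact (p _).2⟩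
    · obtain ⟨k, hk⟩ := ih (g ⟨v, hv⟩) (g _).2 hm
      exact ⟨k + 1, by rwa [iterate_succ_apply, glue_of_notMem_of_notMem hv hc]⟩

variable [Fintype V]

def rootChildren (R : Finset V) (f : V → V) : Finset {v // v ∉ R} :=
  {v | f v ∈ R}

@[simp] theorem mem_rootChildren {v : {v // v ∉ R}} : v ∈ rootChildren R f ↔ f v ∈ R := by
  simp [rootChildren]

theorem exists_iterate_contract_mem (hf : ∀ v, ∃ k, f^[k] v ∈ R) (v : {v // v ∉ R}) :
    ∃ m, (contract R f)^[m] v ∈ rootChildren R f := by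
  obtain ⟨k, hk⟩ := hf v
  induction k generalizing v with
  | zero => exact absurd hk v.2
  | succ k ih =>
    by_cases h : f v ∈ R
    · exact ⟨0, mem_rootChildren.mpr h⟩
    · obtain ⟨m, hm⟩ := ih ⟨f v, h⟩ hk
      exact ⟨m + 1, by rwa [iterate_succ_apply, contract_of_notMem h]⟩

theorem rootChildren_glue : rootChildren R (glue C p g) = C := by
  ext v
  rw [mem_rootChildren]
  by_cases hc : v ∈ C
  · simp [glue_of_notMem_of_mem v.2 hc, hc]
  · simpa [glue_of_notMem_of_notMem v.2 hc, hc] using (g v).2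

def fiberEquiv (C : Finset {v // v ∉ R}) :
    {f : V → V // IsParentMap R f ∧ rootChildren R f = C} ≃
      (C → R) × {g : {v // v ∉ R} → {v // v ∉ R} // IsParentMap C g} where
  toFun f :=
    have hC : ∀ v, v ∈ C ↔ f.1 v ∈ R := fun v => by rw [← mem_rootChildren, f.2.2]
    (fun c => ⟨f.1 c, (hC c).mp c.2⟩,
      ⟨contract R f.1, fun c h => contract_of_mem ((hC c).mp h),
        fun v => by simpa [f.2.2] using exists_iterate_contract_mem f.2.1.2 v⟩)
  invFun q := ⟨glue C q.1 q.2, ⟨fun _ => glue_of_mem, exists_iterate_glue_mem q.2.2.2⟩,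
    rootChildren_glue⟩
  left_inv := by
    rintro ⟨f, ⟨hfR, -⟩, rfl⟩
    ext v
    dsimp only
    by_cases hv : v ∈ R
    · rw [glue_of_mem hv, hfR v hv]
    by_cases hc : f v ∈ R
    · rw [glue_of_notMem_of_mem hv (mem_rootChildren.mpr hc)]
    · rw [glue_of_notMem_of_notMem hv (by simpa using hc), contract_of_notMem hc]
  right_inv := by
    rintro ⟨p, g, hgC, -⟩
    refine Prod.ext (funext fun c => Subtype.ext ?_) (Subtype.ext (funext fun v => ?_))
    · exact glue_of_notMem_of_mem c.1.2 c.2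
    change contract R (glue C p g) v = g v
    by_cases hc : v ∈ C
    · have h := glue_of_notMem_of_mem (p := p) (g := g) v.2 hc
      rw [contract_of_mem (h ▸ (p _).2), hgC v hc]
    · have h := glue_of_notMem_of_notMem (p := p) (g := g) v.2 hc
      exact (contract_of_notMem (h ▸ (g v).2)).trans (Subtype.ext h)

theorem card_isParentMap_eq_sum (R : Finset V) :
    Nat.card {f : V → V // IsParentMap R f} =
      ∑ C : Finset {v // v ∉ R}, #R ^ #C *
        Nat.card {g : {v // v ∉ R} → {v // v ∉ R} // IsParentMap C g} := by
  rw [Nat.card_congr ((Equiv.sigmaFiberEquiv fun f : {f // IsParentMap R f} =>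
    rootChildren R f.1).symm.trans (Equiv.sigmaCongrRight fun C =>
      (Equiv.subtypeSubtypeEquivSubtypeInter _ _).trans (fiberEquiv C))), Nat.card_sigma]
  simp [Nat.card_prod]

end ParentMap

theorem sum_range_choose_mul_mul_pow_mul_pow {R : Type*} [CommSemiring R] (n : ℕ) (x y : R) :
    ∑ j ∈ range (n + 1), (n.choose j * j : R) * x ^ j * y ^ (n - j) =
      n * x * (x + y) ^ (n - 1) := by
  cases n with
  | zero => simp
  | succ m =>
    have hterm : ∀ i ∈ range (m + 1), ((m + 1).choose (i + 1) * ↑(i + 1) : R) * x ^ (i + 1) *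
        y ^ (m + 1 - (i + 1)) = (m + 1) * x * (x ^ i * y ^ (m - i) * m.choose i) := by
      intro i _
      have h := congrArg (Nat.cast : ℕ → R) (Nat.add_one_mul_choose_eq m i)
      push_cast at h
      rw [Nat.add_sub_add_right, pow_succ, Nat.cast_add_one, ← h]
      ring
    rw [sum_range_succ', sum_congr rfl hterm, ← mul_sum, ← add_pow]
    simp

/-- Multiplied by `n = card V`, the count `#R * n ^ (n - #R - 1)` becomes valid also for
`R = univ`, where the truncated subtraction would spoil it. -/
theorem card_mul_card_isParentMap [Fintype V] [DecidableEq V] (R : Finset V) :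
    Fintype.card V * Nat.card {f : V → V // IsParentMap R f} =
      #R * Fintype.card V ^ (Fintype.card V - #R) := by
  induction hn : Fintype.card V using Nat.strong_induction_on generalizing V with
  | _ n ih =>
  rcases eq_or_ne R univ with rfl | hRu
  · rw [coe_univ, card_isParentMap_univ, card_univ, hn, Nat.sub_self, pow_zero, mul_one]
  obtain ⟨v₀, hv₀⟩ : ∃ v, v ∉ R := by simpa [eq_univ_iff_forall] using hRu
  rcases R.eq_empty_or_nonempty with rfl | hR
  · have : Nonempty V := ⟨v₀⟩
    rw [coe_empty, Nat.card_of_isEmpty, card_empty, mul_zero, zero_mul]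
  have ha : Fintype.card {v // v ∉ R} + #R = n := by
    rw [← hn, Fintype.card_subtype_compl, Fintype.card_coe]
    exact Nat.sub_add_cancel (card_le_univ R)
  set a := Fintype.card {v // v ∉ R}
  have ha0 : 0 < a := Fintype.card_pos_iff.mpr ⟨⟨v₀, hv₀⟩⟩
  have key : a * Nat.card {f : V → V // IsParentMap R f} = a * (#R * n ^ (a - 1)) := calc
    _ = ∑ C : Finset {v // v ∉ R}, #R ^ #C *
          (a * Nat.card {g : {v // v ∉ R} → {v // v ∉ R} // IsParentMap C g}) := by
      rw [ParentMap.card_isParentMap_eq_sum, mul_sum]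
      exact sum_congr rfl fun C _ => by ring
    _ = ∑ C : Finset {v // v ∉ R}, #R ^ #C * (#C * a ^ (a - #C)) := by
      refine sum_congr rfl fun C _ => ?_
      rw [ih a (by have := hR.card_pos; omega) C rfl]
    _ = ∑ j ∈ range (a + 1), (a.choose j * j : ℕ) * #R ^ j * a ^ (a - j) := by
      rw [← powerset_univ]
      refine (sum_powerset_apply_card fun j => #R ^ j * (j * a ^ (a - j))).trans ?_
      exact sum_congr rfl fun j _ => by rw [card_univ, smul_eq_mul]; ring
    _ = a * #R * (#R + a) ^ (a - 1) := by
      simpa using sum_range_choose_mul_mul_pow_mul_pow a #R a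
    _ = a * (#R * n ^ (a - 1)) := by rw [add_comm, ha, mul_assoc]
  rw [Nat.eq_of_mul_eq_mul_left ha0 key, ← ha, Nat.add_sub_cancel, ← mul_assoc, mul_comm _ #R,
    mul_assoc, mul_pow_sub_one ha0.ne']

theorem cayley_formula_general (n : ℕ) :
    Nat.card {G : SimpleGraph (Fin (n+1)) // G.IsTree} = (n+1)^(n-1) := by
  have h := card_mul_card_isParentMap ({0} : Finset (Fin (n + 1)))
  rw [Fintype.card_fin, card_singleton, one_mul, Nat.add_sub_cancel, coe_singleton,
    ← card_isTree_eq_card_isParentMap] at h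
  refine Nat.eq_of_mul_eq_mul_left n.succ_pos (h.trans ?_)
  cases n <;> simp [pow_succ']

/-- Cayley's formula: the number of labeled trees on the vertex set
`{0, 1, ..., n}` (i.e. `Fin (n+1)`) equals `(n+1)^(n-1)`. -/
theorem cayley_formula (n : ℕ) (hn : 1 ≤ n) :
    Nat.card {G : SimpleGraph (Fin (n+1)) // G.IsTree} = (n+1)^(n-1) :=
  cayley_formula_general n
end

section
/- The number of parking functions of length n equals (n+1)^(n-1) for all n ≥ 1. -/
/-!
Pollak's circular argument. Read a function `g : Fin n → ZMod (n + 1)` as the preferences of `n`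
cars on a circular street with `n + 1` spots, and let `ZMod (n + 1)` act by rotating all
preferences at once. If `c k` is the number of cars preferring spot `k`, then `g` (shifted up by
one) is a parking function exactly when every proper prefix of `(c k - 1)_k` has nonnegative sum.
These numbers add up to `n - (n + 1) = -1`, so by the cycle lemma exactly one rotation of every
`g` is a parking function. Hence `(n + 1) ^ n = (n + 1) * #PF(n)`.
-/

/-- `IsPF n π` : `π` is a parking function of length `n`, i.e. a sequence of
positive integers whose weakly increasing rearrangement `b₁ ≤ ⋯ ≤ bₙ`
satisfies `b_j ≤ j` for all `1 ≤ j ≤ n`. -/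
def IsPF (n : ℕ) (π : Fin n → ℕ) : Prop :=
  (∀ i, 1 ≤ π i) ∧ ∃ σ : Equiv.Perm (Fin n),
    (Monotone fun j => π (σ j)) ∧ ∀ j : Fin n, π (σ j) ≤ j.val + 1

open Finset

theorem Nat.card_eq_card_subtype_mul_of_existsUnique_vadd {G α : Type*} [AddGroup G]
    [AddAction G α] {P : α → Prop} (h : ∀ a, ∃! g : G, P (g +ᵥ a)) :
    Nat.card α = Nat.card {a // P a} * Nat.card G := by
  choose c hc hc_unique using h
  rw [← Nat.card_prod]
  refine Nat.card_congr
    { toFun a := (⟨c a +ᵥ a, hc a⟩, c a)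
      invFun p := -p.2 +ᵥ p.1.1
      left_inv a := neg_vadd_vadd (c a) a
      right_inv := ?_ }
  rintro ⟨⟨b, hb⟩, g⟩
  have hg : c (-g +ᵥ b) = g := (hc_unique _ g (by simpa using hb)).symm
  simp [hg]

namespace ZMod

theorem sum_range_natCast {M : Type*} [AddCommMonoid M] (N : ℕ) [NeZero N] (f : ZMod N → M) :
    ∑ j ∈ range N, f j = ∑ k, f k := by
  refine sum_nbij (fun j : ℕ => (j : ZMod N)) (by simp) ?_ ?_ (by simp)
  · intro a ha b hb hab
    simpa [val_natCast_of_lt (mem_range.1 ha), val_natCast_of_lt (mem_range.1 hb)] using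
      congrArg val hab
  · intro k _
    exact ⟨k.val, mem_range.2 k.val_lt, natCast_zmod_val k⟩

variable {N : ℕ} [NeZero N]

theorem sum_range_add_period {M : Type*} [AddCommMonoid M] (f : ZMod N → M) (t : ℕ) :
    ∑ j ∈ range (t + N), f j = ∑ j ∈ range t, f j + ∑ k, f k := by
  rw [sum_range_add]
  congr 1
  simp only [Nat.cast_add]
  rw [sum_range_natCast N (fun k => f (t + k))]
  exact Fintype.sum_equiv (Equiv.addLeft (t : ZMod N)) _ _ fun _ => rfl

/-- The cycle lemma of Dvoretzky and Motzkin. -/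
theorem existsUnique_forall_sum_range_add_nonneg (x : ZMod N → ℤ) (hx : ∑ k, x k = -1) :
    ∃! s : ZMod N, ∀ u < N, 0 ≤ ∑ j ∈ range u, x (s + j) := by
  set S : ℕ → ℤ := fun t => ∑ j ∈ range t, x j with hS
  have period (t : ℕ) : S (t + N) = S t - 1 := by
    simp only [hS, sum_range_add_period, hx, sub_eq_add_neg]
  have good_iff (s : ℕ) :
      (∀ u < N, 0 ≤ ∑ j ∈ range u, x (s + j)) ↔ ∀ u < N, S s ≤ S (s + u) := by
    simp only [hS, sum_range_add, Nat.cast_add, le_add_iff_nonneg_right]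
  have not_good_of_lt {a b : ℕ} (hab : a < b) (hba : b < a + N)
      (ha : ∀ u < N, S a ≤ S (a + u)) (hb : ∀ u < N, S b ≤ S (b + u)) : False := by
    have h₁ := ha (b - a) (by omega)
    have h₂ := hb (a + N - b) (by omega)
    rw [Nat.add_sub_cancel' hab.le] at h₁
    rw [Nat.add_sub_cancel' hba.le, period] at h₂
    omega
  -- The rotation point is the first place where `S` attains its minimum over a period.
  obtain ⟨s, hs_mem, hs_lexMin⟩ := exists_min_image (range N) (fun t => toLex (S t, t))
    ⟨0, mem_range.2 (NeZero.pos N)⟩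
  have hsN : s < N := mem_range.1 hs_mem
  have hmin (t : ℕ) (ht : t < N) : S s < S t ∨ S s = S t ∧ s ≤ t :=
    Prod.Lex.toLex_le_toLex.1 (hs_lexMin t (mem_range.2 ht))
  have hs : ∀ u < N, S s ≤ S (s + u) := by
    intro u hu
    by_cases hwrap : s + u < N
    · rcases hmin _ hwrap with h | h <;> omega
    · have := hmin (s + u - N) (by omega)
      rw [show s + u = s + u - N + N by omega, period]
      omega
  refine ⟨s, (good_iff s).2 hs, fun s' hs' => ?_⟩
  rw [← natCast_zmod_val s'] at hs' ⊢
  have hs'N := s'.val_lt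
  replace hs' := (good_iff _).1 hs'
  congr 1
  by_contra hne
  rcases Nat.lt_or_gt_of_ne hne with h | h
  · exact not_good_of_lt h (by omega) hs' hs
  · exact not_good_of_lt h (by omega) hs hs'

theorem card_val_lt_eq_sum_range {n : ℕ} (g : Fin n → ZMod N) {k : ℕ} (hk : k ≤ N) :
    #{i | (g i).val < k} = ∑ j ∈ range k, #{i | g i = j} := by
  rw [card_eq_sum_card_fiberwise (f := fun i => (g i).val) (t := range k) (by simp [Set.MapsTo])]
  refine sum_congr rfl fun j hj => ?_
  have hjN : j < N := (mem_range.1 hj).trans_le hk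
  congr 1
  ext i
  simp only [mem_filter, mem_univ, true_and]
  constructor
  · rintro ⟨-, hij⟩
    rw [← hij, natCast_zmod_val]
  · rintro hij
    simpa [hij, val_natCast_of_lt hjN] using hj

end ZMod

theorem Monotone.forall_le_val_add_one_iff {n : ℕ} {b : Fin n → ℕ} (hb : Monotone b) :
    (∀ j, b j ≤ j + 1) ↔ ∀ k ≤ n, k ≤ #{j | b j ≤ k} := by
  constructor
  · intro h k hk
    calc k = #{j : Fin n | (j : ℕ) < k} := by rw [Fin.card_filter_val_lt, min_eq_right hk]
      _ ≤ #{j | b j ≤ k} := card_le_card fun j => by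
        simpa only [mem_filter_univ] using fun hjk => (h j).trans (Nat.succ_le_of_lt hjk)
  · intro h j
    by_contra! hj
    have : #{j' | b j' ≤ j + 1} ≤ #{j' : Fin n | (j' : ℕ) < j} := card_le_card fun j' => by
      simp only [mem_filter_univ]
      intro hj'
      by_contra! hjj'
      have := hb (Fin.le_iff_val_le_val.2 hjj')
      omega
    rw [Fin.card_filter_val_lt] at this
    have := h (j + 1) j.isLt
    omega

theorem IsPF.le_length {n : ℕ} {π : Fin n → ℕ} (h : IsPF n π) (i : Fin n) : π i ≤ n := by
  obtain ⟨-, σ, -, hle⟩ := h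
  simpa using (hle (σ.symm i)).trans (σ.symm i).isLt

theorem isPF_iff_forall_le_card {n : ℕ} {π : Fin n → ℕ} :
    IsPF n π ↔ (∀ i, 1 ≤ π i) ∧ ∀ k ≤ n, k ≤ #{i | π i ≤ k} := by
  have card_perm (σ : Equiv.Perm (Fin n)) (k : ℕ) : #{j | π (σ j) ≤ k} = #{i | π i ≤ k} :=
    card_equiv σ (by simp)
  refine and_congr_right fun _ => ⟨?_, fun h => ⟨Tuple.sort π, Tuple.monotone_sort π, ?_⟩⟩
  · rintro ⟨σ, hmono, hle⟩ k hk
    exact card_perm σ k ▸ hmono.forall_le_val_add_one_iff.1 hle k hk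
  · exact (Tuple.monotone_sort π).forall_le_val_add_one_iff.2 fun k hk =>
      (card_perm _ k).symm ▸ h k hk

theorem isPF_val_add_one_iff {n : ℕ} (g : Fin n → ZMod (n + 1)) :
    IsPF n (fun i => (g i).val + 1) ↔
      ∀ u < n + 1, 0 ≤ ∑ j ∈ range u, ((#{i | g i = j} : ℤ) - 1) := by
  simp only [isPF_iff_forall_le_card, le_add_iff_nonneg_left, zero_le, implies_true, true_and,
    Nat.add_one_le_iff, Nat.lt_add_one_iff]
  refine forall₂_congr fun k hk => ?_
  rw [ZMod.card_val_lt_eq_sum_range g (by omega), sum_sub_distrib, sub_nonneg]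
  simp only [sum_const, card_range, nsmul_eq_mul, mul_one]
  norm_cast

theorem existsUnique_vadd_isPF {n : ℕ} (g : Fin n → ZMod (n + 1)) :
    ∃! c : ZMod (n + 1), IsPF n (fun i => ((c +ᵥ g) i).val + 1) := by
  have fiber (c j : ZMod (n + 1)) : #{i | (c +ᵥ g) i = j} = #{i | g i = -c + j} :=
    congrArg card (filter_congr fun i _ => by simp [eq_neg_add_iff_add_eq])
  have total : ∑ k, ((#{i | g i = k} : ℤ) - 1) = -1 := by
    rw [sum_sub_distrib, ← Nat.cast_sum, ← card_eq_sum_card_fiberwise (by simp [Set.MapsTo])]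
    simp
  simp only [isPF_val_add_one_iff, fiber]
  exact (Equiv.neg _).existsUnique_congr_right.2
    (ZMod.existsUnique_forall_sum_range_add_nonneg _ total)

theorem card_subtype_isPF_val_add_one (n : ℕ) :
    Nat.card {g : Fin n → ZMod (n + 1) // IsPF n (fun i => (g i).val + 1)} =
      Nat.card {π // IsPF n π} := by
  refine Nat.card_eq_of_bijective (fun g => ⟨_, g.2⟩) ⟨fun g g' h => ?_, fun π => ?_⟩
  · ext i : 2
    exact ZMod.val_injective _ (by simpa using congrFun (congrArg Subtype.val h) i)
  · have hval (i : Fin n) : ((π.1 i - 1 : ℕ) : ZMod (n + 1)).val + 1 = π.1 i := by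
      have := π.2.1 i
      have := π.2.le_length i
      rw [ZMod.val_natCast_of_lt (by omega)]
      omega
    refine ⟨⟨fun i => (π.1 i - 1 : ℕ), ?_⟩, ?_⟩
    · simpa only [hval] using π.2
    · ext i
      exact hval i

theorem card_parking_functions_general (n : ℕ) :
    Nat.card {π : Fin n → ℕ // IsPF n π} = (n+1)^(n-1) := by
  have orbits := Nat.card_eq_card_subtype_mul_of_existsUnique_vadd
    (P := fun g : Fin n → ZMod (n + 1) => IsPF n (fun i => (g i).val + 1)) existsUnique_vadd_isPF
  rw [Nat.card_fun, card_subtype_isPF_val_add_one, Nat.card_zmod, Nat.card_eq_fintype_card,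
    Fintype.card_fin] at orbits
  cases n with
  | zero => simpa using orbits.symm
  | succ m =>
    rw [pow_succ] at orbits
    simpa using (Nat.eq_of_mul_eq_mul_right (Nat.succ_pos _) orbits).symm

/-- The number of parking functions of length `n` equals `(n+1)^(n-1)`. -/
theorem card_parking_functions (n : ℕ) (hn : 1 ≤ n) :
    Nat.card {π : Fin n → ℕ // IsPF n π} = (n+1)^(n-1) :=
  card_parking_functions_general n
end

section
/- The tree inversion enumerator I_n(q) satisfies the Kreweras recurrence: I_0(q) = 1 and, for n ≥ 1, I_n(q) = Σ_{i=0}^{n-1} C(n-1,i) (1 + q + ... + q^i) I_i(q) I_{n-1-i}(q). -/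
open Finset Polynomial

/-- `j` lies on the unique path from `i` to the root `0` in the tree `T`. -/
def OnPath {n : ℕ} (T : SimpleGraph (Fin (n+1))) (i j : Fin (n+1)) : Prop :=
  ∀ p : T.Walk i 0, p.IsPath → j ∈ p.support

/-- The number of inversions of a tree on `{0,...,n}` rooted at `0`: pairs
`(i,j)` with `1 ≤ i < j ≤ n` such that `j` is on the path from `i` to `0`. -/
noncomputable def treeInv {n : ℕ} (T : SimpleGraph (Fin (n+1))) : ℕ :=
  Nat.card {p : Fin (n+1) × Fin (n+1) //
    0 < p.1.val ∧ p.1 < p.2 ∧ OnPath T p.1 p.2}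

/-- The tree inversion enumerator `I_n(q) = Σ_{T ∈ Tree(n+1)} q^{inv T}`. -/
noncomputable def treeInvEnum (n : ℕ) : Polynomial ℤ :=
  ∑ᶠ T : {G : SimpleGraph (Fin (n+1)) // G.IsTree}, X ^ treeInv T.val

/-!
A tree on `V` rooted at `r` is encoded by its parent map. Cutting the edge from `r` to the child
`c` whose subtree `B` contains a fixed vertex `m ≠ r` splits the tree, bijectively, into a tree on
`B` rooted at `c` and a tree on `V \ B` rooted at `r`. Inversions inside the two pieces survive,
and since `r` becomes an ancestor of all of `B`, the new ones are the pairs `(x, r)` with `x ∈ B`,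
`x < r`. By induction on `#V` the enumerator is therefore `q ^ rank V r * I_{#V - 1}`, where
`rank V r` counts the elements of `V` below `r`: summing over the root `c ∈ B` produces
`1 + q + ⋯ + q ^ (#B - 1)`, and there are `C(#V - 2, i)` blocks `B ∋ m` of size `i + 1`.

Trees on `Fin (n + 1)` correspond to parent maps towards `0` through their unique paths; the graph
of a parent map is a tree because every spanning tree of it has that same parent map.
-/

namespace TreeInversions

open scoped Classical

variable {α : Type*}

def Reaches (f : α → α) (x y : α) : Prop := ∃ k, f^[k] x = y

section Reaches

variable {f g : α → α} {x y : α}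

theorem Reaches.refl (f : α → α) (x : α) : Reaches f x x := ⟨0, rfl⟩

theorem reaches_iff : Reaches f x y ↔ y = x ∨ Reaches f (f x) y := by
  constructor
  · rintro ⟨_ | k, rfl⟩
    · exact Or.inl rfl
    · exact Or.inr ⟨k, rfl⟩
  · rintro (rfl | ⟨k, rfl⟩)
    · exact Reaches.refl f y
    · exact ⟨k + 1, rfl⟩

theorem Reaches.of_apply (h : Reaches f (f x) y) : Reaches f x y := reaches_iff.2 (Or.inr h)

theorem reaches_of_apply_eq_self (hx : f x = x) : Reaches f x y ↔ y = x := by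
  simp [Reaches, Function.iterate_fixed hx, eq_comm]

theorem Reaches.mem {s : Set α} (hs : Set.MapsTo f s s) (hx : x ∈ s) (h : Reaches f x y) :
    y ∈ s := by
  obtain ⟨k, rfl⟩ := h
  exact hs.iterate k hx

theorem reaches_congr {s : Set α} (hfg : Set.EqOn f g s) (hs : Set.MapsTo f s s) (hx : x ∈ s) :
    Reaches f x y ↔ Reaches g x y := by
  suffices ∀ k, ∀ x ∈ s, f^[k] x = g^[k] x by simp only [Reaches, this _ x hx]
  intro k
  induction k with
  | zero => simp
  | succ k ih =>
    intro x hx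
    rw [Function.iterate_succ_apply, Function.iterate_succ_apply, ← hfg hx, ih _ (hs hx)]

theorem eq_of_reaches_of_apply_eq {r c c' : α} (hr : f r = r) (hc : Reaches f x c)
    (hc' : Reaches f x c') (hfc : f c = r) (hfc' : f c' = r) (hcr : c ≠ r) (hcr' : c' ≠ r) :
    c = c' := by
  obtain ⟨i, rfl⟩ := hc
  obtain ⟨j, rfl⟩ := hc'
  have later : ∀ i d, f (f^[i] x) = r → f^[d + 1 + i] x = r := fun i d h => by
    rw [Function.iterate_add_apply, Function.iterate_succ_apply, h, Function.iterate_fixed hr]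
  rcases le_total i j with h | h
  · obtain ⟨_ | d, rfl⟩ := Nat.exists_eq_add_of_le' h
    · simp
    · exact absurd (later i d hfc) hcr'
  · obtain ⟨_ | d, rfl⟩ := Nat.exists_eq_add_of_le' h
    · simp
    · exact absurd (later j d hfc') hcr

end Reaches

section RootedTree

variable [DecidableEq α] {V : Finset α} {r : α} {f : α → α}

/-- `f` is the parent map of a tree on `V` rooted at `r`, extended by the identity off `V \ {r}`. -/
structure IsRootedTree (V : Finset α) (r : α) (f : α → α) : Prop where
  apply_eq_self : ∀ x ∉ V.erase r, f x = x
  mapsTo : Set.MapsTo f V V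
  reaches_root : ∀ x ∈ V, Reaches f x r

namespace IsRootedTree

variable (hf : IsRootedTree V r f)
include hf

theorem apply_root : f r = r := hf.apply_eq_self r (notMem_erase r V)

theorem reaches_root_iff {y : α} : Reaches f r y ↔ y = r :=
  reaches_of_apply_eq_self hf.apply_root

theorem induction {P : α → Prop} (root : P r) (step : ∀ x ∈ V.erase r, P (f x) → P x) :
    ∀ x ∈ V, P x := by
  intro x hx
  obtain ⟨k, hk⟩ := hf.reaches_root x hx
  induction k generalizing x with
  | zero => exact (show x = r from hk) ▸ root
  | succ k ih =>
    by_cases hxr : x = r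
    · exact hxr ▸ root
    · exact step x (mem_erase.2 ⟨hxr, hx⟩) (ih (f x) (hf.mapsTo hx) hk)

theorem eq_root_of_isPeriodicPt {x : α} {n : ℕ} (hx : x ∈ V) (hn : 0 < n)
    (hper : Function.IsPeriodicPt f n x) : x = r := by
  obtain ⟨k, hk⟩ := hf.reaches_root x hx
  obtain ⟨d, hd⟩ := Nat.exists_eq_add_of_le' (Nat.le_mul_of_pos_left k hn)
  rw [← (hper.mul_const k).eq, hd, Function.iterate_add_apply, hk,
    Function.iterate_fixed hf.apply_root]

theorem apply_ne_self {x : α} (hx : x ∈ V.erase r) : f x ≠ x := fun h =>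
  (mem_erase.1 hx).1 (hf.eq_root_of_isPeriodicPt (mem_of_mem_erase hx) one_pos h)

theorem apply_apply_ne_self {x : α} (hx : x ∈ V.erase r) : f (f x) ≠ x := fun h =>
  (mem_erase.1 hx).1 (hf.eq_root_of_isPeriodicPt (mem_of_mem_erase hx) two_pos h)

theorem exists_reaches_apply_eq_root {x : α} (hx : x ∈ V.erase r) :
    ∃ c ∈ V.erase r, f c = r ∧ Reaches f x c := by
  refine hf.induction (P := fun x => x ≠ r → ∃ c ∈ V.erase r, f c = r ∧ Reaches f x c)
    (fun h => absurd rfl h) (fun x hx ih _ => ?_) x (mem_of_mem_erase hx) (mem_erase.1 hx).1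
  by_cases hfx : f x = r
  · exact ⟨x, hx, hfx, Reaches.refl f x⟩
  · obtain ⟨c, hc, hfc, hxc⟩ := ih hfx
    exact ⟨c, hc, hfc, hxc.of_apply⟩

end IsRootedTree

theorem finite_setOf_isRootedTree (V : Finset α) (r : α) :
    {f | IsRootedTree V r f}.Finite := by
  refine Set.Finite.of_finite_image (f := fun f (x : V) => f x) ?_ fun f hf g hg hfg => ?_
  · refine (Set.finite_range fun (g : V → V) (x : V) => (g x : α)).subset ?_
    rintro _ ⟨f, hf, rfl⟩
    exact ⟨fun x => ⟨f x, hf.mapsTo x.2⟩, rfl⟩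
  · funext x
    by_cases hx : x ∈ V
    · exact congrFun hfg ⟨x, hx⟩
    · have hx' : x ∉ V.erase r := fun h => hx (mem_of_mem_erase h)
      rw [hf.apply_eq_self x hx', hg.apply_eq_self x hx']

noncomputable def rootedTrees (V : Finset α) (r : α) : Finset (α → α) :=
  (finite_setOf_isRootedTree V r).toFinset

@[simp]
theorem mem_rootedTrees : f ∈ rootedTrees V r ↔ IsRootedTree V r f :=
  Set.Finite.mem_toFinset _

noncomputable def graft (B : Finset α) (c r : α) (f₁ f₂ : α → α) : α → α :=
  Function.update (B.piecewise f₁ f₂) c r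

section Graft

variable {B : Finset α} {c : α} {f₁ f₂ : α → α} {x y : α}

theorem graft_self : graft B c r f₁ f₂ c = r := Function.update_self ..

theorem graft_of_mem_erase (hx : x ∈ B.erase c) : graft B c r f₁ f₂ x = f₁ x := by
  rw [graft, Function.update_of_ne (mem_erase.1 hx).1,
    piecewise_eq_of_mem _ _ _ (mem_of_mem_erase hx)]

theorem graft_of_notMem (hc : c ∈ B) (hx : x ∉ B) : graft B c r f₁ f₂ x = f₂ x := by
  rw [graft, Function.update_of_ne (by rintro rfl; exact hx hc), piecewise_eq_of_notMem _ _ _ hx]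

variable (h₁ : IsRootedTree B c f₁) (h₂ : IsRootedTree (V \ B) r f₂) (hc : c ∈ B)
  (hr : r ∈ V) (hB : B ⊆ V.erase r)
include h₁ h₂ hc hr hB

theorem isRootedTree_graft : IsRootedTree V r (graft B c r f₁ f₂) := by
  have hrB : r ∉ B := fun h => (mem_erase.1 (hB h)).1 rfl
  have hW : ∀ x ∈ V \ B, graft B c r f₁ f₂ x = f₂ x := fun x hx =>
    graft_of_notMem hc (mem_sdiff.1 hx).2
  refine ⟨fun x hx => ?_, fun x hx => ?_, fun x hx => ?_⟩
  · obtain rfl | hxr := eq_or_ne x r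
    · rw [hW x (mem_sdiff.2 ⟨hr, hrB⟩), h₂.apply_root]
    · have hxV : x ∉ V := fun h => hx (mem_erase.2 ⟨hxr, h⟩)
      rw [graft_of_notMem hc fun h => hxV (mem_of_mem_erase (hB h)),
        h₂.apply_eq_self x fun h => hxV (mem_sdiff.1 (mem_of_mem_erase h)).1]
  · obtain rfl | hxc := eq_or_ne x c
    · rw [graft_self]; exact hr
    by_cases hxB : x ∈ B
    · rw [graft_of_mem_erase (mem_erase.2 ⟨hxc, hxB⟩)]
      exact mem_of_mem_erase (hB (h₁.mapsTo hxB))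
    · have hxW : x ∈ V \ B := mem_sdiff.2 ⟨hx, hxB⟩
      rw [hW x hxW]
      exact (mem_sdiff.1 (h₂.mapsTo hxW)).1
  · by_cases hxB : x ∈ B
    · refine h₁.induction (P := (Reaches (graft B c r f₁ f₂) · r))
        (Reaches.of_apply (by rw [graft_self]; exact .refl _ r)) (fun x hx ih => ?_) x hxB
      exact Reaches.of_apply (by rwa [graft_of_mem_erase hx])
    · refine h₂.induction (P := (Reaches (graft B c r f₁ f₂) · r))
        (Reaches.refl _ r) (fun x hx ih => ?_) x (mem_sdiff.2 ⟨hx, hxB⟩)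
      exact Reaches.of_apply (by rwa [hW x (mem_of_mem_erase hx)])

theorem reaches_graft_of_mem_left (hx : x ∈ B) :
    Reaches (graft B c r f₁ f₂) x y ↔ Reaches f₁ x y ∨ y = r := by
  have hg := fun y => (isRootedTree_graft h₁ h₂ hc hr hB).reaches_root_iff (y := y)
  refine h₁.induction
    (P := fun x => ∀ y, Reaches (graft B c r f₁ f₂) x y ↔ Reaches f₁ x y ∨ y = r)
    (fun y => ?_) (fun x hx ih y => ?_) x hx y
  · rw [reaches_iff, graft_self, hg, h₁.reaches_root_iff]
  · rw [reaches_iff, graft_of_mem_erase hx, ih, ← or_assoc, ← reaches_iff]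

omit h₁ hr hB in
theorem reaches_graft_of_mem_sdiff (hx : x ∈ V \ B) :
    Reaches (graft B c r f₁ f₂) x y ↔ Reaches f₂ x y :=
  (reaches_congr (fun _ hx => (graft_of_notMem hc (mem_sdiff.1 hx).2).symm) h₂.mapsTo hx).symm

theorem filter_reaches_graft : V.filter (Reaches (graft B c r f₁ f₂) · c) = B := by
  ext x
  rw [mem_filter]
  constructor
  · rintro ⟨hxV, hxc⟩
    by_contra hxB
    have hxW : x ∈ V \ B := mem_sdiff.2 ⟨hxV, hxB⟩
    rw [reaches_graft_of_mem_sdiff h₂ hc hxW] at hxc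
    exact (mem_sdiff.1 (hxc.mem h₂.mapsTo hxW)).2 hc
  · intro hxB
    exact ⟨mem_of_mem_erase (hB hxB), (reaches_graft_of_mem_left h₁ h₂ hc hr hB hxB).2
      (Or.inl (h₁.reaches_root x hxB))⟩

omit h₂ hc hr hB in
theorem piecewise_graft_left : (B.erase c).piecewise (graft B c r f₁ f₂) id = f₁ := by
  funext x
  by_cases hx : x ∈ B.erase c
  · rw [piecewise_eq_of_mem _ _ _ hx, graft_of_mem_erase hx]
  · rw [piecewise_eq_of_notMem _ _ _ hx, h₁.apply_eq_self x hx, id]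

omit h₁ hr hB in
theorem piecewise_graft_right : (V \ B).piecewise (graft B c r f₁ f₂) id = f₂ := by
  funext x
  by_cases hx : x ∈ V \ B
  · rw [piecewise_eq_of_mem _ _ _ hx, graft_of_notMem hc (mem_sdiff.1 hx).2]
  · rw [piecewise_eq_of_notMem _ _ _ hx, h₂.apply_eq_self x fun h => hx (mem_of_mem_erase h),
      id]

end Graft

section Descendants

noncomputable def descendants (V : Finset α) (f : α → α) (c : α) : Finset α :=
  V.filter (Reaches f · c)

variable (hf : IsRootedTree V r f) {c : α} (hc : c ∈ V.erase r)
include hf hc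

theorem descendants_subset_erase : descendants V f c ⊆ V.erase r := fun x hx => by
  obtain ⟨hxV, hxc⟩ := mem_filter.1 hx
  refine mem_erase.2 ⟨?_, hxV⟩
  rintro rfl
  exact (mem_erase.1 hc).1 (hf.reaches_root_iff.1 hxc)

omit hf in
theorem mem_descendants_self : c ∈ descendants V f c :=
  mem_filter.2 ⟨mem_of_mem_erase hc, Reaches.refl f c⟩

omit hc in
theorem apply_mem_descendants {x : α} (hx : x ∈ (descendants V f c).erase c) :
    f x ∈ descendants V f c := by
  obtain ⟨hxc, hxV, hx⟩ := by simpa [descendants] using hx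
  exact mem_filter.2 ⟨hf.mapsTo hxV, (reaches_iff.1 hx).resolve_left (Ne.symm hxc)⟩

theorem isRootedTree_descendants :
    IsRootedTree (descendants V f c) c (((descendants V f c).erase c).piecewise f id) := by
  set D := descendants V f c
  refine ⟨fun x hx => piecewise_eq_of_notMem _ _ _ hx, fun x hx => ?_, fun x hx => ?_⟩
  · by_cases hxc : x = c
    · rw [hxc, piecewise_eq_of_notMem _ _ _ (notMem_erase c D)]
      exact mem_descendants_self hc
    · have hx' : x ∈ D.erase c := mem_erase.2 ⟨hxc, hx⟩
      rw [piecewise_eq_of_mem _ _ _ hx']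
      exact apply_mem_descendants hf hx'
  · refine hf.induction (P := fun x => x ∈ D → Reaches _ x c)
      (fun hr => absurd (descendants_subset_erase hf hc hr) (notMem_erase r V))
      (fun x _ ih hxD => ?_) x (mem_of_mem_erase (descendants_subset_erase hf hc hx)) hx
    by_cases hxc : x = c
    · exact hxc ▸ Reaches.refl _ x
    · have hx' : x ∈ D.erase c := mem_erase.2 ⟨hxc, hxD⟩
      refine Reaches.of_apply ?_
      rw [piecewise_eq_of_mem _ _ _ hx']
      exact ih (apply_mem_descendants hf hx')

omit hc in
theorem apply_mem_sdiff_descendants {x : α} (hx : x ∈ V \ descendants V f c) :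
    f x ∈ V \ descendants V f c := by
  obtain ⟨hxV, hxD⟩ := mem_sdiff.1 hx
  refine mem_sdiff.2 ⟨hf.mapsTo hxV, fun h => hxD (mem_filter.2 ⟨hxV, ?_⟩)⟩
  exact (mem_filter.1 h).2.of_apply

omit hc in
theorem isRootedTree_sdiff_descendants :
    IsRootedTree (V \ descendants V f c) r ((V \ descendants V f c).piecewise f id) := by
  set W := V \ descendants V f c
  refine ⟨fun x hx => ?_, fun x hx => ?_, fun x hx => ?_⟩
  · by_cases hxW : x ∈ W
    · rw [piecewise_eq_of_mem _ _ _ hxW, of_not_not fun h => hx (mem_erase.2 ⟨h, hxW⟩),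
        hf.apply_root]
    · exact piecewise_eq_of_notMem _ _ _ hxW
  · rw [mem_coe, piecewise_eq_of_mem _ _ _ hx]
    exact apply_mem_sdiff_descendants hf hx
  · refine hf.induction (P := fun x => x ∈ W → Reaches _ x r) (fun _ => Reaches.refl _ r)
      (fun x _ ih hxW => ?_) x (mem_sdiff.1 hx).1 hx
    refine Reaches.of_apply ?_
    rw [piecewise_eq_of_mem _ _ _ hxW]
    exact ih (apply_mem_sdiff_descendants hf hxW)

theorem graft_descendants (hfc : f c = r) :
    graft (descendants V f c) c r (((descendants V f c).erase c).piecewise f id)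
      ((V \ descendants V f c).piecewise f id) = f := by
  funext x
  by_cases hxc : x = c
  · rw [hxc, graft_self, hfc]
  by_cases hxD : x ∈ descendants V f c
  · have hx' := mem_erase.2 ⟨hxc, hxD⟩
    rw [graft_of_mem_erase hx', piecewise_eq_of_mem _ _ _ hx']
  · rw [graft_of_notMem (mem_descendants_self hc) hxD]
    by_cases hxV : x ∈ V
    · rw [piecewise_eq_of_mem _ _ _ (mem_sdiff.2 ⟨hxV, hxD⟩)]
    · rw [piecewise_eq_of_notMem _ _ _ fun h => hxV (mem_sdiff.1 h).1, id,
        hf.apply_eq_self x fun h => hxV (mem_of_mem_erase h)]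

end Descendants

/-- The data `(B, c, f₁, f₂)` of a tree `f₁` on some `B ∋ m` rooted at `c`, to be grafted
below the root `r` of a tree `f₂` on `V \ B`. -/
noncomputable def splittings (V : Finset α) (r m : α) :
    Finset (Σ _ : Finset α, (Σ _ : α, α → α) × (α → α)) :=
  ((V.erase r).powerset.filter (m ∈ ·)).sigma
    fun B => (B.sigma fun c => rootedTrees B c) ×ˢ rootedTrees (V \ B) r

theorem mem_splittings {m : α} {x : Σ _ : Finset α, (Σ _ : α, α → α) × (α → α)} :
    x ∈ splittings V r m ↔ x.1 ⊆ V.erase r ∧ m ∈ x.1 ∧ x.2.1.1 ∈ x.1 ∧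
      IsRootedTree x.1 x.2.1.1 x.2.1.2 ∧ IsRootedTree (V \ x.1) r x.2.2 := by
  simp [splittings, and_assoc]

noncomputable def graftSplitting (r : α)
    (x : Σ _ : Finset α, (Σ _ : α, α → α) × (α → α)) : α → α :=
  graft x.1 x.2.1.1 r x.2.1.2 x.2.2

variable {m : α}

theorem isRootedTree_graftSplitting (hr : r ∈ V) {x} (hx : x ∈ splittings V r m) :
    IsRootedTree V r (graftSplitting r x) :=
  have ⟨hB, _, hc, h₁, h₂⟩ := mem_splittings.1 hx
  isRootedTree_graft h₁ h₂ hc hr hB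

theorem injOn_graftSplitting (hr : r ∈ V) : Set.InjOn (graftSplitting r) (splittings V r m) := by
  rintro ⟨B, ⟨c, f₁⟩, f₂⟩ hx ⟨B', ⟨c', f₁'⟩, f₂'⟩ hx' heq
  obtain ⟨hB, hmB, hc, h₁, h₂⟩ := mem_splittings.1 hx
  obtain ⟨hB', hmB', hc', h₁', h₂'⟩ := mem_splittings.1 hx'
  dsimp only [graftSplitting] at *
  -- In the grafted tree, `c` is the child of `r` above `m`, and `B` the set of descendants of `c`.
  have hmc := (reaches_graft_of_mem_left h₁ h₂ hc hr hB hmB).2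
    (Or.inl (h₁.reaches_root m hmB))
  have hmc' := (reaches_graft_of_mem_left h₁' h₂' hc' hr hB' hmB').2
    (Or.inl (h₁'.reaches_root m hmB'))
  rw [← heq] at hmc'
  obtain rfl : c = c' :=
    eq_of_reaches_of_apply_eq (isRootedTree_graft h₁ h₂ hc hr hB).apply_root hmc hmc'
      graft_self (heq ▸ graft_self) (mem_erase.1 (hB hc)).1 (mem_erase.1 (hB' hc')).1
  obtain rfl : B = B' := by
    rw [← filter_reaches_graft h₁ h₂ hc hr hB, heq,
      filter_reaches_graft h₁' h₂' hc' hr hB']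
  obtain rfl : f₁ = f₁' := by
    rw [← piecewise_graft_left h₁ (r := r) (f₂ := f₂), heq, piecewise_graft_left h₁']
  obtain rfl : f₂ = f₂' := by
    rw [← piecewise_graft_right h₂ hc (f₁ := f₁), heq, piecewise_graft_right h₂' hc]
  rfl

theorem surjOn_graftSplitting (hm : m ∈ V.erase r) :
    Set.SurjOn (graftSplitting r) (splittings V r m) (rootedTrees V r) := by
  intro f hf
  rw [mem_coe, mem_rootedTrees] at hf
  obtain ⟨c, hc, hfc, hmc⟩ := hf.exists_reaches_apply_eq_root hm
  refine ⟨⟨descendants V f c, ⟨c, ((descendants V f c).erase c).piecewise f id⟩,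
    (V \ descendants V f c).piecewise f id⟩, ?_, graft_descendants hf hc hfc⟩
  exact mem_splittings.2 ⟨descendants_subset_erase hf hc,
    mem_filter.2 ⟨mem_of_mem_erase hm, hmc⟩, mem_descendants_self hc,
    isRootedTree_descendants hf hc, isRootedTree_sdiff_descendants hf⟩

end RootedTree

section Inversions

variable [LinearOrder α] {V : Finset α} {r : α}

noncomputable def invCount (V : Finset α) (f : α → α) : ℕ :=
  #{p ∈ V ×ˢ V | p.1 < p.2 ∧ Reaches f p.1 p.2}

def rank (V : Finset α) (r : α) : ℕ := #{x ∈ V | x < r}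

noncomputable def invEnum (V : Finset α) (r : α) : ℤ[X] :=
  ∑ f ∈ rootedTrees V r, X ^ invCount V f

variable {B : Finset α} {c : α} {f₁ f₂ : α → α}

/-- `r` becomes an ancestor of all of `B`: new inversions `(x, r)` with `x ∈ B`, `x < r`. -/
theorem invCount_graft (h₁ : IsRootedTree B c f₁) (h₂ : IsRootedTree (V \ B) r f₂)
    (hc : c ∈ B) (hr : r ∈ V) (hB : B ⊆ V.erase r) :
    invCount V (graft B c r f₁ f₂) = invCount B f₁ + rank B r + invCount (V \ B) f₂ := by
  have hrB : r ∉ B := fun h => (mem_erase.1 (hB h)).1 rfl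
  have hBV : ∀ x ∈ B, x ∈ V := fun x hx => mem_of_mem_erase (hB hx)
  have hsplit : {p ∈ V ×ˢ V | p.1 < p.2 ∧ Reaches (graft B c r f₁ f₂) p.1 p.2} =
      ({p ∈ B ×ˢ B | p.1 < p.2 ∧ Reaches f₁ p.1 p.2} ∪ {x ∈ B | x < r} ×ˢ {r}) ∪
        {p ∈ (V \ B) ×ˢ (V \ B) | p.1 < p.2 ∧ Reaches f₂ p.1 p.2} := by
    ext ⟨a, b⟩
    simp only [mem_filter, mem_union, mem_product, mem_singleton, mem_sdiff]
    by_cases haB : a ∈ B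
    · have hb : Reaches f₁ a b → b ∈ B := (·.mem h₁.mapsTo haB)
      rw [reaches_graft_of_mem_left h₁ h₂ hc hr hB haB]
      grind
    by_cases haV : a ∈ V
    · have haW : a ∈ V \ B := mem_sdiff.2 ⟨haV, haB⟩
      have hb : Reaches f₂ a b → b ∈ V \ B := (·.mem h₂.mapsTo haW)
      rw [reaches_graft_of_mem_sdiff h₂ hc haW]
      grind
    · grind
  rw [invCount, hsplit, card_union_of_disjoint, card_union_of_disjoint, card_product,
    card_singleton, mul_one, rank, invCount, invCount]
  all_goals
    refine disjoint_left.2 fun ⟨a, b⟩ h h' => ?_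
    simp only [mem_filter, mem_union, mem_product, mem_singleton, mem_sdiff] at h h'
    grind

/-- Cut the edge from the root `r` to the child `c` whose subtree `B` contains `m`. -/
theorem invEnum_eq_sum (hr : r ∈ V) {m : α} (hm : m ∈ V.erase r) :
    invEnum V r = ∑ B ∈ (V.erase r).powerset with m ∈ B,
      (∑ c ∈ B, invEnum B c) * X ^ rank B r * invEnum (V \ B) r := by
  calc invEnum V r = ∑ x ∈ splittings V r m, X ^ invCount V (graftSplitting r x) :=
        (sum_nbij (graftSplitting r)
          (fun x hx => mem_rootedTrees.2 (isRootedTree_graftSplitting hr hx))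
          (injOn_graftSplitting hr) (surjOn_graftSplitting hm) fun _ _ => rfl).symm
    _ = _ := by
        rw [splittings, sum_sigma]
        refine sum_congr rfl fun B hB => ?_
        rw [sum_product, sum_sigma, sum_mul, sum_mul]
        refine sum_congr rfl fun c hc => ?_
        rw [invEnum, sum_mul, sum_mul]
        refine sum_congr rfl fun f₁ hf₁ => ?_
        rw [invEnum, mul_sum]
        refine sum_congr rfl fun f₂ hf₂ => ?_
        rw [graftSplitting, invCount_graft (mem_rootedTrees.1 hf₁) (mem_rootedTrees.1 hf₂) hc hr
          (mem_powerset.1 (mem_filter.1 hB).1), pow_add, pow_add]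

theorem rank_add_rank_sdiff (hB : B ⊆ V) : rank B r + rank (V \ B) r = rank V r := by
  simp only [rank, card_filter]
  rw [add_comm, sum_sdiff hB]

theorem sum_rank (B : Finset α) {M : Type*} [AddCommMonoid M] (g : ℕ → M) :
    ∑ c ∈ B, g (rank B c) = ∑ j ∈ range #B, g j := by
  induction B using Finset.induction_on_max with
  | empty => simp
  | insert a s hlt ih =>
    have ha : a ∉ s := fun h => lt_irrefl a (hlt a h)
    have hrank : ∀ c ∈ s, rank (insert a s) c = rank s c := fun c hc => by
      rw [rank, filter_insert, if_neg (hlt c hc).not_gt, rank]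
    rw [sum_insert ha, sum_congr rfl fun c hc => congrArg g (hrank c hc), ih,
      card_insert_of_notMem ha,
      sum_range_succ, add_comm, rank, filter_insert, if_neg (lt_irrefl a),
      filter_true_of_mem hlt]

theorem invEnum_singleton (r : α) : invEnum {r} r = 1 := by
  have htrees : rootedTrees {r} r = {id} := by
    ext f
    simp only [mem_rootedTrees, mem_singleton]
    constructor
    · intro hf
      funext x
      exact hf.apply_eq_self x (by simp)
    · rintro rfl
      exact ⟨fun _ _ => rfl, Set.mapsTo_id _, fun _ hx => ⟨0, mem_singleton.1 hx⟩⟩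
  simp [invEnum, htrees, invCount, filter_singleton]

end Inversions

theorem sum_powerset_filter_mem {α M : Type*} [DecidableEq α] [AddCommMonoid M] {s : Finset α}
    {a : α} (ha : a ∈ s) (F : Finset α → M) :
    ∑ B ∈ s.powerset with a ∈ B, F B = ∑ A ∈ (s.erase a).powerset, F (insert a A) := by
  rw [sum_filter, ← insert_erase ha, sum_powerset_insert (notMem_erase a s),
    erase_insert_eq_erase, erase_idem]
  rw [sum_eq_zero fun A hA => if_neg fun h => notMem_erase a s (mem_powerset.1 hA h), zero_add]
  exact sum_congr rfl fun A _ => if_pos (mem_insert_self a A)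

noncomputable def kreweras : ℕ → ℤ[X]
  | 0 => 1
  | n + 1 => ∑ i : Fin (n + 1),
      (n.choose i : ℤ[X]) * (∑ k ∈ range (i + 1), X ^ k) * kreweras i * kreweras (n - i)

theorem kreweras_zero : kreweras 0 = 1 := by
  rw [kreweras]

theorem kreweras_succ (n : ℕ) : kreweras (n + 1) = ∑ i ∈ range (n + 1),
    (n.choose i : ℤ[X]) * (∑ k ∈ range (i + 1), X ^ k) * kreweras i * kreweras (n - i) := by
  rw [kreweras, Fin.sum_univ_eq_sum_range (fun i =>
    (n.choose i : ℤ[X]) * (∑ k ∈ range (i + 1), X ^ k) * kreweras i * kreweras (n - i))]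

/-- The defining recurrence, with `choose` counting the blocks `B ∋ a` of each size. -/
theorem kreweras_card_eq_sum {β : Type*} [DecidableEq β] {s : Finset β} {a : β} (ha : a ∈ s) :
    kreweras #s = ∑ B ∈ s.powerset with a ∈ B,
      (∑ k ∈ range #B, X ^ k) * kreweras (#B - 1) * kreweras (#s - #B) := by
  obtain ⟨N, hN⟩ : ∃ N, #s = N + 1 := ⟨#s - 1, by have := card_pos.2 ⟨a, ha⟩; omega⟩
  have hcard : ∀ A ∈ (s.erase a).powerset, #(insert a A) = #A + 1 := fun A hA =>
    card_insert_of_notMem fun h => notMem_erase a s (mem_powerset.1 hA h)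
  rw [sum_powerset_filter_mem ha, sum_congr rfl fun A hA => by
      rw [hcard A hA, add_tsub_cancel_right, hN, Nat.add_sub_add_right],
    sum_powerset_apply_card fun i =>
      (∑ k ∈ range (i + 1), X ^ k) * kreweras i * kreweras (N - i),
    card_erase_of_mem ha, hN, add_tsub_cancel_right, kreweras_succ]
  refine sum_congr rfl fun i _ => ?_
  rw [nsmul_eq_mul]
  ring

theorem invEnum_eq_X_pow_rank_mul_kreweras {α : Type*} [LinearOrder α] {V : Finset α} {r : α}
    (hr : r ∈ V) : invEnum V r = X ^ rank V r * kreweras (#V - 1) := by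
  induction hV : #V using Nat.strong_induction_on generalizing V r with
  | _ n ih =>
  obtain hV1 | ⟨m, hm⟩ := (V.erase r).eq_empty_or_nonempty
  · obtain rfl : V = {r} := by
      rw [← insert_erase hr, hV1, insert_empty]
    simp [invEnum_singleton, rank, ← hV, kreweras_zero, filter_singleton]
  have hterm : ∀ B ∈ {B ∈ (V.erase r).powerset | m ∈ B},
      (∑ c ∈ B, invEnum B c) * X ^ rank B r * invEnum (V \ B) r = X ^ rank V r *
        ((∑ k ∈ range #B, X ^ k) * kreweras (#B - 1) * kreweras (#(V.erase r) - #B)) := by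
    intro B hB
    obtain ⟨hBV, hmB⟩ := mem_filter.1 hB
    rw [mem_powerset] at hBV
    have hBcard : #B < #V := card_lt_card (hBV.trans_ssubset (erase_ssubset hr))
    have hWcard : #(V \ B) = #V - #B := card_sdiff_of_subset (hBV.trans (erase_subset r V))
    have hW : #(V \ B) < #V := by
      have := card_pos.2 ⟨m, hmB⟩
      omega
    rw [sum_congr rfl fun c hc => ih _ (hV ▸ hBcard) hc rfl,
      ih _ (hV ▸ hW) (mem_sdiff.2 ⟨hr, fun h => (mem_erase.1 (hBV h)).1 rfl⟩) rfl,
      ← sum_mul,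
      sum_rank B (X ^ ·), hWcard, card_erase_of_mem hr,
      ← rank_add_rank_sdiff (hBV.trans (erase_subset r V)), Nat.sub_right_comm]
    ring
  rw [invEnum_eq_sum hr hm, sum_congr rfl hterm, ← mul_sum, ← kreweras_card_eq_sum hm,
    card_erase_of_mem hr, hV]

section Graph

variable {β : Type*}

def parentGraph (f : β → β) : SimpleGraph β := SimpleGraph.fromRel fun x y => f x = y

theorem IsRootedTree.parentGraph_connected [Fintype β] [DecidableEq β] {r : β} {f : β → β}
    (hf : IsRootedTree univ r f) : (parentGraph f).Connected := by
  refine (SimpleGraph.connected_iff_exists_forall_reachable _).2 ⟨r, fun x => ?_⟩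
  refine (hf.induction (P := ((parentGraph f).Reachable · r)) (.refl r) (fun x hx ih => ?_) x
    (mem_univ x)).symm
  exact (SimpleGraph.Adj.reachable ((SimpleGraph.fromRel_adj _ _ _).2
    ⟨(hf.apply_ne_self hx).symm, Or.inl rfl⟩)).trans ih

variable {G : SimpleGraph β} (hG : G.IsTree) (r : β)

noncomputable def rootPath (x : β) : G.Walk x r := (hG.existsUnique_path x r).choose

noncomputable def parent (x : β) : β := (rootPath hG r x).snd

variable {r}

theorem isPath_rootPath (x : β) : (rootPath hG r x).IsPath :=
  (hG.existsUnique_path x r).choose_spec.1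

theorem eq_rootPath {x : β} {p : G.Walk x r} (hp : p.IsPath) : p = rootPath hG r x :=
  (hG.existsUnique_path x r).choose_spec.2 p hp

theorem parent_root : parent hG r r = r := by
  rw [parent, ← eq_rootPath hG SimpleGraph.Walk.IsPath.nil]
  rfl

theorem adj_parent {x : β} (hx : x ≠ r) : G.Adj x (parent hG r x) :=
  SimpleGraph.Walk.adj_snd (SimpleGraph.Walk.not_nil_of_ne hx)

theorem tail_rootPath {x : β} : (rootPath hG r x).tail = rootPath hG r (parent hG r x) :=
  eq_rootPath hG (isPath_rootPath hG x).tail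

theorem support_rootPath {x : β} (hx : x ≠ r) :
    (rootPath hG r x).support = x :: (rootPath hG r (parent hG r x)).support := by
  rw [← SimpleGraph.Walk.cons_support_tail (SimpleGraph.Walk.not_nil_of_ne hx)]
  exact congrArg (x :: ·) (congrArg SimpleGraph.Walk.support (tail_rootPath hG))

theorem length_rootPath {x : β} (hx : x ≠ r) :
    (rootPath hG r (parent hG r x)).length + 1 = (rootPath hG r x).length := by
  rw [← SimpleGraph.Walk.length_tail_add_one (SimpleGraph.Walk.not_nil_of_ne hx)]
  exact congrArg (· + 1) (congrArg SimpleGraph.Walk.length (tail_rootPath hG)).symm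

theorem mem_support_rootPath_iff {x y : β} :
    y ∈ (rootPath hG r x).support ↔ Reaches (parent hG r) x y := by
  induction hL : (rootPath hG r x).length generalizing x with
  | zero =>
    obtain rfl : x = r := SimpleGraph.Walk.eq_of_length_eq_zero hL
    rw [reaches_of_apply_eq_self (parent_root hG), ← eq_rootPath hG SimpleGraph.Walk.IsPath.nil]
    simp
  | succ L ih =>
    obtain rfl | hx := eq_or_ne x r
    · rw [← eq_rootPath hG SimpleGraph.Walk.IsPath.nil] at hL
      simp at hL
    have := length_rootPath hG hx
    rw [support_rootPath hG hx, List.mem_cons, reaches_iff, ih (by omega)]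

theorem isRootedTree_parent [Fintype β] [DecidableEq β] : IsRootedTree univ r (parent hG r) where
  apply_eq_self x hx := by
    obtain rfl : x = r := of_not_not fun h => hx (mem_erase.2 ⟨h, mem_univ x⟩)
    exact parent_root hG
  mapsTo x _ := mem_coe.2 (mem_univ _)
  reaches_root x _ := (mem_support_rootPath_iff hG).1 (SimpleGraph.Walk.end_mem_support _)

theorem parentGraph_parent [Fintype β] [DecidableEq β] : parentGraph (parent hG r) = G := by
  have hle : parentGraph (parent hG r) ≤ G := fun x y hxy => by
    obtain ⟨hne, rfl | rfl⟩ := (SimpleGraph.fromRel_adj _ _ _).1 hxy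
    · exact adj_parent hG fun h => hne (by rw [h, parent_root])
    · exact (adj_parent hG fun h => hne (by rw [h, parent_root])).symm
  exact le_antisymm hle ((SimpleGraph.isTree_iff_minimal_connected.1 hG).2
    (isRootedTree_parent hG).parentGraph_connected hle)

namespace IsRootedTree

variable [Fintype β] [DecidableEq β] {f g : β → β}

theorem eq_of_parentGraph_le (hf : IsRootedTree univ r f) (hg : IsRootedTree univ r g)
    (hle : parentGraph g ≤ parentGraph f) : g = f := by
  funext x
  refine hg.induction (P := fun x => g x = f x) (by rw [hg.apply_root, hf.apply_root])
    (fun x hx ih => ?_) x (mem_univ x)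
  have hadj := hle ((SimpleGraph.fromRel_adj _ _ _).2 ⟨(hg.apply_ne_self hx).symm, Or.inl rfl⟩)
  obtain ⟨-, h | h⟩ := (SimpleGraph.fromRel_adj _ _ _).1 hadj
  · exact h.symm
  · exact absurd (ih.trans h) (hg.apply_apply_ne_self hx)

theorem isTree_parentGraph (hf : IsRootedTree univ r f) : (parentGraph f).IsTree := by
  obtain ⟨H, hle, hH⟩ := hf.parentGraph_connected.exists_isTree_le
  rw [← parentGraph_parent hH (r := r)] at hle
  have hpar := hf.eq_of_parentGraph_le (isRootedTree_parent hH) hle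
  rwa [← parentGraph_parent hH (r := r), hpar] at hH

theorem parent_parentGraph (hf : IsRootedTree univ r f) : parent hf.isTree_parentGraph r = f :=
  hf.eq_of_parentGraph_le (isRootedTree_parent _) (parentGraph_parent _).le

end IsRootedTree

end Graph

variable {n : ℕ}

theorem onPath_iff {T : SimpleGraph (Fin (n + 1))} (hT : T.IsTree) {i j : Fin (n + 1)} :
    OnPath T i j ↔ Reaches (parent hT 0) i j :=
  ⟨fun h => (mem_support_rootPath_iff hT).1 (h _ (isPath_rootPath hT i)),
    fun h p hp => by rw [eq_rootPath hT hp]; exact (mem_support_rootPath_iff hT).2 h⟩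

theorem treeInv_eq_invCount {T : SimpleGraph (Fin (n + 1))} (hT : T.IsTree) :
    treeInv T = invCount univ (parent hT 0) := by
  rw [treeInv, Nat.card_eq_fintype_card, Fintype.card_subtype, invCount, univ_product_univ]
  refine congrArg card (filter_congr fun p _ => ?_)
  rw [onPath_iff hT]
  refine ⟨fun h => h.2, fun h => ⟨Fin.pos_iff_ne_zero.2 fun h0 => ?_, h⟩⟩
  rw [h0, (isRootedTree_parent hT).reaches_root_iff] at h
  exact h.1.ne' h.2

theorem treeInvEnum_eq_invEnum : treeInvEnum n = invEnum univ (0 : Fin (n + 1)) := by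
  rw [treeInvEnum, finsum_eq_sum_of_fintype, invEnum]
  exact sum_bij' (fun T _ => parent T.2 0)
    (fun f hf => ⟨parentGraph f, (mem_rootedTrees.1 hf).isTree_parentGraph⟩)
    (fun T _ => mem_rootedTrees.2 (isRootedTree_parent T.2)) (fun _ _ => mem_univ _)
    (fun T _ => Subtype.ext (parentGraph_parent T.2))
    (fun f hf => (mem_rootedTrees.1 hf).parent_parentGraph)
    (fun T _ => by rw [treeInv_eq_invCount T.2])

theorem treeInvEnum_eq_kreweras (n : ℕ) : treeInvEnum n = kreweras n := by
  rw [treeInvEnum_eq_invEnum, invEnum_eq_X_pow_rank_mul_kreweras (mem_univ 0)]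
  simp [rank]

end TreeInversions

/-- Kreweras' recurrence for the tree inversion enumerator. -/
theorem treeInvEnum_recurrence :
    treeInvEnum 0 = 1 ∧
    ∀ n : ℕ, 1 ≤ n →
      treeInvEnum n = ∑ i ∈ Finset.range n,
        (Nat.choose (n-1) i : Polynomial ℤ) * (∑ k ∈ Finset.range (i+1), X ^ k) *
          treeInvEnum i * treeInvEnum (n-1-i) := by
  simp only [TreeInversions.treeInvEnum_eq_kreweras]
  refine ⟨TreeInversions.kreweras_zero, fun n hn => ?_⟩
  obtain ⟨n, rfl⟩ := Nat.exists_eq_add_of_le' hn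
  exact TreeInversions.kreweras_succ n
end

section
/- The parking function cosum enumerator satisfies the Kreweras recurrence: P_0(q) = 1 and, for n ≥ 1, P_n(q) = Σ_{i=0}^{n-1} C(n-1,i) (1 + q + ... + q^i) P_i(q) P_{n-1-i}(q), where P_n(q) = Σ_{π ∈ PF(n)} q^{cosum(π)}. -/
open Finset Polynomial

/-- The cosum of a parking function: `C(n+1,2) - Σ_i π_i`. -/
noncomputable def cosum (n : ℕ) (π : Fin n → ℕ) : ℕ :=
  Nat.choose (n+1) 2 - ∑ i, π i

/-- The parking function cosum enumerator `P_n(q) = Σ_{π ∈ PF(n)} q^{cosum π}`. -/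
noncomputable def pfCosumEnum (n : ℕ) : Polynomial ℤ :=
  ∑ᶠ π ∈ {π : Fin n → ℕ | IsPF n π}, X ^ cosum n π

/-!
Split `π ∈ PF(m+1)` into its first `m` entries `τ` and its last entry `v`, and let `i + 1` be the
first spot the cars `τ` leave empty, i.e. the least `s ≥ 1` such that fewer than `s` entries of `τ`
are at most `s`. Then exactly `i` entries of `τ` are at most `i`, none equals `i + 1`, and `π` is a
parking function iff the entries on those positions `S` form a parking function `α` of length `i`,
the other entries lowered by `i + 1` form a parking function `β` of length `m - i`, and
`1 ≤ v ≤ i + 1`. Moreover `cosum π = (i + 1 - v) + cosum α + cosum β`, so summing over the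
`C(m, i)` sets `S` of each size `i` gives the recurrence.
-/

section CountLE

variable {ι κ : Type*} [Fintype ι] [Fintype κ]

def countLE (f : ι → ℕ) (s : ℕ) : ℕ := #{j | f j ≤ s}

lemma countLE_mono (f : ι → ℕ) : Monotone (countLE f) := fun _ _ hst =>
  card_le_card fun _ => by simp only [mem_filter, mem_univ, true_and]; omega

lemma countLE_le_card (f : ι → ℕ) (s : ℕ) : countLE f s ≤ Fintype.card ι :=
  card_le_univ _

lemma countLE_eq_card {f : ι → ℕ} {s : ℕ} (h : ∀ j, f j ≤ s) :
    countLE f s = Fintype.card ι := by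
  simp [countLE, h]

lemma countLE_eq_zero_iff {f : ι → ℕ} {s : ℕ} : countLE f s = 0 ↔ ∀ j, s < f j := by
  simp [countLE, filter_eq_empty_iff]

lemma countLE_comp_equiv (e : κ ≃ ι) (f : ι → ℕ) (s : ℕ) :
    countLE (f ∘ e) s = countLE f s := by
  simp only [countLE, card_filter, Function.comp_apply,
    e.sum_comp fun j => if f j ≤ s then 1 else 0]

lemma countLE_sum_elim (f : ι → ℕ) (g : κ → ℕ) (s : ℕ) :
    countLE (Sum.elim f g) s = countLE f s + countLE g s := by
  simp only [countLE, card_filter, Fintype.sum_sum_type, Sum.elim_inl, Sum.elim_inr]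
  rfl

lemma countLE_add_const (f : ι → ℕ) (c s : ℕ) :
    countLE (fun j => f j + c) (s + c) = countLE f s := by
  simp [countLE]

lemma countLE_snoc {m : ℕ} (τ : Fin m → ℕ) (v s : ℕ) :
    countLE (Fin.snoc τ v : Fin (m + 1) → ℕ) s = countLE τ s + if v ≤ s then 1 else 0 := by
  simp only [countLE, card_filter, Fin.sum_univ_castSucc, Fin.snoc_castSucc, Fin.snoc_last]

end CountLE

section IsPF

variable {n : ℕ} {π : Fin n → ℕ}

lemma isPF_iff_le_countLE :
    IsPF n π ↔ (∀ j, 1 ≤ π j) ∧ ∀ s ≤ n, s ≤ countLE π s := by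
  refine and_congr_right fun _ => ⟨fun ⟨σ, _, hσ⟩ s hs => ?_, fun h => ?_⟩
  · calc s = #{j : Fin n | j.val < s} := by simp [Fin.card_filter_val_lt, hs]
      _ ≤ countLE (π ∘ σ) s := card_le_card fun j => by
          simp only [mem_filter, mem_univ, true_and, Function.comp_apply]
          have := hσ j
          omega
      _ = countLE π s := countLE_comp_equiv σ π s
  · refine ⟨Tuple.sort π, Tuple.monotone_sort π, fun j => ?_⟩
    by_contra! hj
    have hcount : countLE (π ∘ Tuple.sort π) (j + 1) ≤ #{j' : Fin n | j'.val < j} :=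
      card_le_card fun j' => by
        simp only [mem_filter, mem_univ, true_and, Function.comp_apply]
        intro hj'
        by_contra! hjj'
        have := Tuple.monotone_sort π hjj'
        simp only [Function.comp_apply] at this
        omega
    rw [countLE_comp_equiv, Fin.card_filter_val_lt] at hcount
    have := h (j + 1) j.isLt
    omega

lemma IsPF.le (h : IsPF n π) (j : Fin n) : π j ≤ n := by
  obtain ⟨-, σ, -, hσ⟩ := h
  simpa using (hσ (σ.symm j)).trans (Nat.succ_le_of_lt (σ.symm j).isLt)

lemma IsPF.sum_le (h : IsPF n π) : ∑ j, π j ≤ (n + 1).choose 2 := by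
  obtain ⟨-, σ, -, hσ⟩ := h
  calc ∑ j, π j = ∑ j, π (σ j) := (Equiv.sum_comp σ π).symm
    _ ≤ ∑ j : Fin n, (j.val + 1) := sum_le_sum fun j _ => hσ j
    _ = (n + 1).choose 2 := by
      rw [Fin.sum_univ_eq_sum_range (· + 1), Nat.choose_two_right, ← sum_range_id_mul_two,
        Nat.mul_div_cancel _ two_pos, sum_range_succ', add_zero]

end IsPF

lemma finite_setOf_isPF (n : ℕ) : {π : Fin n → ℕ | IsPF n π}.Finite :=
  (Fintype.piFinset fun _ => Icc 1 n).finite_toSet.subset fun π hπ => by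
    simpa [Pi.le_def] using ⟨hπ.1, hπ.le⟩

noncomputable def pfFinset (n : ℕ) : Finset (Fin n → ℕ) := (finite_setOf_isPF n).toFinset

@[simp]
lemma mem_pfFinset {n : ℕ} {π : Fin n → ℕ} : π ∈ pfFinset n ↔ IsPF n π :=
  (finite_setOf_isPF n).mem_toFinset

lemma pfCosumEnum_eq_sum (n : ℕ) : pfCosumEnum n = ∑ π ∈ pfFinset n, X ^ cosum n π :=
  finsum_mem_eq_finite_toFinset_sum _ _

lemma pfCosumEnum_zero : pfCosumEnum 0 = 1 := by
  have : pfFinset 0 = {Fin.elim0} := by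
    ext π
    simp [Subsingleton.elim π Fin.elim0, isPF_iff_le_countLE]
  simp [pfCosumEnum_eq_sum, this, cosum]

section Split

variable {m : ℕ} (S : Finset (Fin m))

-- Any identification works here: only the set `S` matters, not the order of its elements.
noncomputable def splitEquiv : Fin m ≃ Fin #S ⊕ Fin (m - #S) :=
  (Equiv.sumCompl (· ∈ S)).symm.trans <| Equiv.sumCongr
    (Fintype.equivFinOfCardEq (Fintype.card_coe S))
    (Fintype.equivFinOfCardEq (by simp [Fintype.card_subtype_compl]))

lemma splitEquiv_symm_inl_mem (t : Fin #S) : (splitEquiv S).symm (.inl t) ∈ S := by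
  simp [splitEquiv]

lemma splitEquiv_symm_inr_notMem (t : Fin (m - #S)) : (splitEquiv S).symm (.inr t) ∉ S := by
  simpa [splitEquiv] using ((Fintype.equivFinOfCardEq _).symm t : {j // j ∉ S}).2

noncomputable def splitFun : (Fin m → ℕ) ≃ (Fin #S → ℕ) × (Fin (m - #S) → ℕ) :=
  ((splitEquiv S).arrowCongr (Equiv.refl ℕ)).trans (Equiv.sumArrowEquivProdArrow _ _ _)

variable {S} (τ : Fin m → ℕ)

@[simp]
lemma splitFun_apply_fst (t : Fin #S) : (splitFun S τ).1 t = τ ((splitEquiv S).symm (.inl t)) :=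
  rfl

@[simp]
lemma splitFun_apply_snd (t : Fin (m - #S)) :
    (splitFun S τ).2 t = τ ((splitEquiv S).symm (.inr t)) :=
  rfl

lemma forall_splitFun_iff (P : ℕ → Prop) :
    (∀ j, P (τ j)) ↔ (∀ t, P ((splitFun S τ).1 t)) ∧ ∀ t, P ((splitFun S τ).2 t) := by
  rw [(splitEquiv S).forall_congr_left, Sum.forall]
  rfl

lemma forall_le_iff_mem_iff_splitFun (c : ℕ) :
    (∀ j, τ j ≤ c ↔ j ∈ S) ↔ (∀ t, (splitFun S τ).1 t ≤ c) ∧ ∀ t, c < (splitFun S τ).2 t := by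
  rw [(splitEquiv S).forall_congr_left, Sum.forall]
  simp [splitEquiv_symm_inl_mem, splitEquiv_symm_inr_notMem]

lemma countLE_eq_add_splitFun (s : ℕ) :
    countLE τ s = countLE (splitFun S τ).1 s + countLE (splitFun S τ).2 s := by
  rw [← countLE_sum_elim, ← countLE_comp_equiv (splitEquiv S).symm τ]
  congr 1
  ext (t | t) <;> rfl

lemma sum_eq_add_splitFun : ∑ j, τ j = ∑ t, (splitFun S τ).1 t + ∑ t, (splitFun S τ).2 t := by
  rw [← (splitEquiv S).symm.sum_comp, Fintype.sum_sum_type]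
  rfl

end Split

section Breakpoint

variable {m : ℕ} (τ : Fin m → ℕ)

lemma exists_countLE_succ_le : ∃ s, countLE τ (s + 1) ≤ s :=
  ⟨m, by simpa using countLE_le_card τ (m + 1)⟩

-- `breakpoint τ + 1` is the first spot left empty when cars with preferences `τ` park.
def breakpoint : ℕ := Nat.find (exists_countLE_succ_le τ)

lemma breakpoint_eq_iff {i : ℕ} :
    breakpoint τ = i ↔ countLE τ (i + 1) ≤ i ∧ ∀ s ≤ i, s ≤ countLE τ s := by
  rw [breakpoint, Nat.find_eq_iff]
  refine and_congr_right fun _ => ⟨fun h s hs => ?_, fun h s hs => ?_⟩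
  · rcases s with _ | s
    · exact Nat.zero_le _
    · have := h s (by omega)
      omega
  · have := h (s + 1) (by omega)
    omega

def lowSet : Finset (Fin m) := {j | τ j ≤ breakpoint τ}

lemma lowSet_eq_iff {S : Finset (Fin m)} :
    lowSet τ = S ↔ breakpoint τ = #S ∧ ∀ j, τ j ≤ #S ↔ j ∈ S := by
  constructor
  · rintro rfl
    obtain ⟨hsucc, hle⟩ := (breakpoint_eq_iff τ).1 rfl
    have hcard : #(lowSet τ) = breakpoint τ :=
      le_antisymm ((countLE_mono τ (Nat.le_succ _)).trans hsucc) (hle _ le_rfl)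
    rw [hcard]
    simp [lowSet]
  · rintro ⟨hbreak, hmem⟩
    ext j
    simp [lowSet, hbreak, hmem]

variable {S : Finset (Fin m)}

lemma lowSet_eq_iff_splitFun :
    lowSet τ = S ↔ (∀ s ≤ #S, s ≤ countLE (splitFun S τ).1 s) ∧
      (∀ t, (splitFun S τ).1 t ≤ #S) ∧ ∀ t, #S + 1 < (splitFun S τ).2 t := by
  rw [lowSet_eq_iff, breakpoint_eq_iff, forall_le_iff_mem_iff_splitFun]
  have hc := countLE_eq_add_splitFun (S := S) τ
  constructor
  · rintro ⟨⟨hsucc, hle⟩, hα, hβ⟩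
    have hαcard : countLE (splitFun S τ).1 (#S + 1) = #S := by
      simpa using countLE_eq_card fun t => (hα t).trans (Nat.le_succ _)
    refine ⟨fun s hs => ?_, hα, countLE_eq_zero_iff.1 (by have := hc (#S + 1); omega)⟩
    have := countLE_eq_zero_iff.2 fun t => hs.trans_lt (hβ t)
    have := hle s hs
    have := hc s
    omega
  · rintro ⟨hle, hα, hβ⟩
    refine ⟨⟨?_, fun s hs => ?_⟩, hα, fun t => (Nat.lt_succ_self _).trans (hβ t)⟩
    · have := countLE_eq_zero_iff.2 hβ
      have := countLE_le_card (splitFun S τ).1 (#S + 1)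
      simp only [Fintype.card_fin] at this
      have := hc (#S + 1)
      omega
    · have := hle s hs
      have := hc s
      omega

end Breakpoint

section Fiber

variable {m : ℕ} {S : Finset (Fin m)} {τ : Fin m → ℕ}

lemma isPF_snoc_iff_of_lowSet_eq (hS : lowSet τ = S) (v : ℕ) :
    IsPF (m + 1) (Fin.snoc τ v) ↔ (1 ≤ v ∧ v ≤ #S + 1) ∧ (∀ t, 1 ≤ (splitFun S τ).1 t) ∧
      IsPF (m - #S) fun t => (splitFun S τ).2 t - (#S + 1) := by
  obtain ⟨hle, hα, hβ⟩ := (lowSet_eq_iff_splitFun τ).1 hS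
  set β := fun t => (splitFun S τ).2 t - (#S + 1)
  have hc := countLE_eq_add_splitFun (S := S) τ
  have hαcount : ∀ s, #S ≤ s → countLE (splitFun S τ).1 s = #S := fun s hs => by
    simpa using countLE_eq_card fun t => (hα t).trans hs
  have hβcount : ∀ r, countLE (splitFun S τ).2 (r + (#S + 1)) = countLE β r := fun r => by
    rw [← countLE_add_const β (#S + 1) r]
    congr 1
    funext t
    have := hβ t
    simp only [β]
    omega
  have hS_le : #S ≤ m := S.card_le_univ.trans_eq (Fintype.card_fin m)
  rw [isPF_iff_le_countLE, isPF_iff_le_countLE, Fin.forall_fin_succ']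
  simp only [Fin.snoc_castSucc, Fin.snoc_last, countLE_snoc]
  rw [forall_splitFun_iff (S := S) τ (1 ≤ ·)]
  constructor
  · rintro ⟨⟨⟨hαpos, -⟩, hv⟩, hcount⟩
    have hv' : v ≤ #S + 1 := by
      have h := hcount (#S + 1) (by omega)
      rw [hc, hαcount _ (Nat.le_succ _), countLE_eq_zero_iff.2 hβ] at h
      split_ifs at h <;> omega
    refine ⟨⟨hv, hv'⟩, hαpos, fun t => ?_, fun r hr => ?_⟩
    · have := hβ t
      simp only [β]
      omega
    · have h := hcount (r + (#S + 1)) (by omega)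
      rw [hc, hαcount _ (by omega), hβcount] at h
      split_ifs at h <;> omega
  · rintro ⟨⟨hv, hv'⟩, hαpos, hβpos, hβle⟩
    refine ⟨⟨⟨hαpos, fun t => ?_⟩, hv⟩, fun s hs => ?_⟩
    · have := hβ t
      omega
    · rw [hc]
      by_cases hsS : s ≤ #S
      · have := hle s hsS
        omega
      · obtain ⟨r, rfl⟩ : ∃ r, s = r + (#S + 1) := ⟨s - (#S + 1), by omega⟩
        have := hβle r (by omega)
        rw [hαcount _ (by omega), hβcount, if_pos (by omega)]
        omega

theorem isPF_snoc_and_lowSet_eq_iff (v : ℕ) :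
    IsPF (m + 1) (Fin.snoc τ v) ∧ lowSet τ = S ↔
      (1 ≤ v ∧ v ≤ #S + 1) ∧ IsPF #S (splitFun S τ).1 ∧ (∀ t, #S + 1 < (splitFun S τ).2 t) ∧
        IsPF (m - #S) fun t => (splitFun S τ).2 t - (#S + 1) := by
  constructor
  · rintro ⟨hπ, hS⟩
    obtain ⟨hv, hαpos, hβ⟩ := (isPF_snoc_iff_of_lowSet_eq hS v).1 hπ
    obtain ⟨hle, -, hβgt⟩ := (lowSet_eq_iff_splitFun τ).1 hS
    exact ⟨hv, isPF_iff_le_countLE.2 ⟨hαpos, hle⟩, hβgt, hβ⟩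
  · rintro ⟨hv, hα, hβgt, hβ⟩
    have hS : lowSet τ = S :=
      (lowSet_eq_iff_splitFun τ).2 ⟨(isPF_iff_le_countLE.1 hα).2, hα.le, hβgt⟩
    exact ⟨(isPF_snoc_iff_of_lowSet_eq hS v).2 ⟨hv, hα.1, hβ⟩, hS⟩

end Fiber

lemma add_choose_two (a b : ℕ) : (a + b).choose 2 = a.choose 2 + b.choose 2 + a * b := by
  qify
  push_cast [Nat.cast_choose_two]
  ring

section Glue

variable {m : ℕ} (S : Finset (Fin m))

noncomputable def glue (k : ℕ) (α : Fin #S → ℕ) (β : Fin (m - #S) → ℕ) : Fin (m + 1) → ℕ :=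
  Fin.snoc ((splitFun S).symm (α, fun t => β t + (#S + 1))) (#S + 1 - k)

lemma sum_glue (k : ℕ) (α : Fin #S → ℕ) (β : Fin (m - #S) → ℕ) :
    ∑ j, glue S k α β j = (#S + 1 - k) + ∑ t, α t + (∑ t, β t + (m - #S) * (#S + 1)) := by
  rw [glue, Fin.sum_univ_castSucc, sum_eq_add_splitFun (S := S)]
  simp only [Fin.snoc_castSucc, Fin.snoc_last, Equiv.apply_symm_apply, sum_add_distrib, sum_const,
    card_univ, Fintype.card_fin, smul_eq_mul]
  ring

lemma cosum_glue {k : ℕ} {α : Fin #S → ℕ} {β : Fin (m - #S) → ℕ} (hk : k ≤ #S)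
    (hα : IsPF #S α) (hβ : IsPF (m - #S) β) :
    cosum (m + 1) (glue S k α β) = k + cosum #S α + cosum (m - #S) β := by
  have hchoose := add_choose_two (#S + 1) (m - #S + 1)
  have hS_le : #S ≤ m := S.card_le_univ.trans_eq (Fintype.card_fin m)
  rw [show #S + 1 + (m - #S + 1) = m + 1 + 1 by omega,
    show (#S + 1) * (m - #S + 1) = (m - #S) * (#S + 1) + (#S + 1) by ring] at hchoose
  have := hα.sum_le
  have := hβ.sum_le
  rw [cosum, cosum, cosum, sum_glue]
  omega

end Glue

lemma mul_pfCosumEnum_eq_sum (i j : ℕ) :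
    (∑ k ∈ range (i + 1), X ^ k) * pfCosumEnum i * pfCosumEnum j =
      ∑ x ∈ (range (i + 1) ×ˢ pfFinset i) ×ˢ pfFinset j,
        X ^ (x.1.1 + cosum i x.1.2 + cosum j x.2) := by
  rw [pfCosumEnum_eq_sum, pfCosumEnum_eq_sum, sum_mul_sum, ← sum_product', sum_mul_sum,
    ← sum_product']
  simp only [pow_add]

lemma sum_pfFinset_filter_lowSet_eq {m : ℕ} (S : Finset (Fin m)) :
    ∑ π ∈ pfFinset (m + 1) with lowSet (Fin.init π) = S, X ^ cosum (m + 1) π =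
      (∑ k ∈ range (#S + 1), X ^ k) * pfCosumEnum #S * pfCosumEnum (m - #S) := by
  rw [mul_pfCosumEnum_eq_sum]
  symm
  refine sum_nbij' (fun x => glue S x.1.1 x.1.2 x.2)
    (fun π => ((#S + 1 - π (Fin.last m), (splitFun S (Fin.init π)).1),
      fun t => (splitFun S (Fin.init π)).2 t - (#S + 1))) ?_ ?_ ?_ ?_ ?_
  · rintro ⟨⟨k, α⟩, β⟩ hx
    simp only [mem_product, mem_range, mem_pfFinset, mem_filter] at hx ⊢
    have := (isPF_snoc_and_lowSet_eq_iff (S := S)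
      (τ := (splitFun S).symm (α, fun t => β t + (#S + 1))) (#S + 1 - k)).2
    simp only [Equiv.apply_symm_apply, add_tsub_cancel_right] at this
    rw [glue, Fin.init_snoc]
    exact this ⟨by omega, hx.1.2, fun t => Nat.lt_add_of_pos_left (hx.2.1 t), hx.2⟩
  · intro π hπ
    simp only [mem_product, mem_range, mem_pfFinset, mem_filter] at hπ ⊢
    obtain ⟨hv, hα, -, hβ⟩ :=
      (isPF_snoc_and_lowSet_eq_iff (π (Fin.last m))).1 (by rwa [Fin.snoc_init_self])
    exact ⟨⟨by omega, hα⟩, hβ⟩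
  · rintro ⟨⟨k, α⟩, β⟩ hx
    simp only [mem_product, mem_range] at hx
    simp [glue, show #S + 1 - (#S + 1 - k) = k by omega]
  · intro π hπ
    simp only [mem_filter, mem_pfFinset] at hπ
    obtain ⟨hv, -, hβ, -⟩ :=
      (isPF_snoc_and_lowSet_eq_iff (π (Fin.last m))).1 (by rwa [Fin.snoc_init_self])
    conv_rhs => rw [← Fin.snoc_init_self π]
    rw [glue, show #S + 1 - (#S + 1 - π (Fin.last m)) = π (Fin.last m) by omega]
    congr
    rw [Equiv.symm_apply_eq]
    exact Prod.ext rfl <| funext fun t => Nat.sub_add_cancel (hβ t).le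
  · rintro ⟨⟨k, α⟩, β⟩ hx
    simp only [mem_product, mem_range, mem_pfFinset] at hx ⊢
    rw [cosum_glue S (by omega) hx.1.2 hx.2, pow_add, pow_add]

/-- Kreweras' recurrence for the parking function cosum enumerator. -/
theorem pfCosumEnum_recurrence :
    pfCosumEnum 0 = 1 ∧
    ∀ n : ℕ, 1 ≤ n →
      pfCosumEnum n = ∑ i ∈ Finset.range n,
        (Nat.choose (n-1) i : Polynomial ℤ) * (∑ k ∈ Finset.range (i+1), X ^ k) *
          pfCosumEnum i * pfCosumEnum (n-1-i) := by
  refine ⟨pfCosumEnum_zero, fun n hn => ?_⟩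
  obtain ⟨m, rfl⟩ := Nat.exists_eq_add_of_le' hn
  rw [pfCosumEnum_eq_sum, ← sum_fiberwise _ fun π => lowSet (Fin.init π)]
  simp only [sum_pfFinset_filter_lowSet_eq, ← powerset_univ, sum_powerset_apply_card
    (fun i => (∑ k ∈ range (i + 1), X ^ k) * pfCosumEnum i * pfCosumEnum (m - i))]
  simp [nsmul_eq_mul, mul_assoc]
end

section
/- For n ≥ 1, the cosum generating function over parking functions π of length n with no strict excedance (i.e., π_i ≤ i for all i) equals [n]_q!. Equivalently, Ĩ_n(q,0) = [n]_q!. -/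
open Finset Polynomial

lemma sum_range_succ_eq_choose (n : ℕ) :
    ∑ i ∈ Finset.range n, (i + 1) = Nat.choose (n+1) 2 := by
  induction n with
  | zero => simp
  | succ m ih =>
      rw [Finset.sum_range_succ, ih, show m + 1 + 1 = m + 2 from rfl,
        Nat.choose_succ_succ (m+1) 1, Nat.choose_one_right]
      ring

lemma icc_sum_pow (k : ℕ) :
    ∑ a ∈ Finset.Icc 1 k, (X : Polynomial ℤ) ^ (k - a)
      = ∑ j ∈ Finset.range k, (X : Polynomial ℤ) ^ j := by
  refine Finset.sum_nbij' (i := fun a => k - a) (j := fun j => k - j) ?_ ?_ ?_ ?_ ?_ <;>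
    (intro a ha; simp only [Finset.mem_Icc, Finset.mem_range] at *) <;> first | omega | rfl

lemma sorted_le (n : ℕ) (π : Fin n → ℕ) (h : ∀ i : Fin n, π i ≤ i.val + 1)
    (j : Fin n) : π (Tuple.sort π j) ≤ j.val + 1 := by
  obtain ⟨m, hjm, hm⟩ : ∃ m : Fin n, j ≤ m ∧ (Tuple.sort π m).val ≤ j.val := by
    by_contra hcon
    push_neg at hcon
    have hcard := Finset.card_le_card_of_injOn (Tuple.sort π)
      (fun m hm => Finset.mem_Ioi.2 (Fin.lt_def.2 (hcon m (Finset.mem_Ici.1 hm))))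
      ((Tuple.sort π).injective.injOn)
    have h1 : (Finset.Ici j).card = n - j.val := Fin.card_Ici j
    have h3 : (Finset.Ioi j).card = n - 1 - j.val := Fin.card_Ioi j
    have := j.isLt
    omega
  calc π (Tuple.sort π j) ≤ π (Tuple.sort π m) := Tuple.monotone_sort π hjm
    _ ≤ (Tuple.sort π m).val + 1 := h _
    _ ≤ j.val + 1 := by omega

/-- `Ĩ_n(q,0) = [n]_q!`: for `n ≥ 1`, the cosum generating function over
parking functions of length `n` with no strict excedance (`π_i ≤ i` for all
`i`) equals `[1]_q [2]_q ⋯ [n]_q`. -/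
theorem pfCosumEnum_no_excedance (n : ℕ) (hn : 1 ≤ n) :
    (∑ᶠ π ∈ {π : Fin n → ℕ | IsPF n π ∧ ∀ i : Fin n, π i ≤ i.val + 1},
        (X : Polynomial ℤ) ^ cosum n π)
      = ∏ k ∈ Finset.Icc 1 n, ∑ j ∈ Finset.range k, (X : Polynomial ℤ) ^ j := by
  classical
  have hset : {π : Fin n → ℕ | IsPF n π ∧ ∀ i : Fin n, π i ≤ i.val + 1}
      = ↑(Fintype.piFinset fun i : Fin n => Finset.Icc 1 (i.val + 1)) := by
    ext π
    simp only [Set.mem_setOf_eq, Finset.mem_coe, Fintype.mem_piFinset, Finset.mem_Icc]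
    constructor
    · rintro ⟨⟨h1, _⟩, h2⟩ i; exact ⟨h1 i, h2 i⟩
    · intro h
      refine ⟨⟨fun i => (h i).1, Tuple.sort π, Tuple.monotone_sort π,
        sorted_le n π (fun i => (h i).2)⟩, fun i => (h i).2⟩
  rw [hset, finsum_mem_coe_finset]
  have hsum : ∑ i : Fin n, (i.val + 1) = Nat.choose (n+1) 2 := by
    rw [Fin.sum_univ_eq_sum_range (fun i => i + 1) n, sum_range_succ_eq_choose]
  have key : ∀ π ∈ Fintype.piFinset fun i : Fin n => Finset.Icc 1 (i.val + 1),
      (X : Polynomial ℤ) ^ cosum n π = ∏ i : Fin n, (X : Polynomial ℤ) ^ (i.val + 1 - π i) := by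
    intro π hπ
    rw [Finset.prod_pow_eq_pow_sum]
    congr 1
    rw [Finset.sum_tsub_distrib _
      (fun i _ => (Finset.mem_Icc.1 (Fintype.mem_piFinset.1 hπ i)).2), hsum]
    rfl
  rw [Finset.sum_congr rfl key,
    ← Finset.prod_univ_sum (fun i : Fin n => Finset.Icc 1 (i.val + 1))
      (fun (i : Fin n) (a : ℕ) => (X : Polynomial ℤ) ^ (i.val + 1 - a))]
  have step : ∀ i : Fin n, (∑ a ∈ Finset.Icc 1 (i.val + 1), (X : Polynomial ℤ) ^ (i.val + 1 - a))
      = ∑ j ∈ Finset.range (i.val + 1), (X : Polynomial ℤ) ^ j := fun i => icc_sum_pow (i.val + 1)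
  rw [Finset.prod_congr rfl (fun i _ => step i)]
  rw [Fin.prod_univ_eq_prod_range (fun k => ∑ j ∈ Finset.range (k + 1), (X : Polynomial ℤ) ^ j) n]
  refine Finset.prod_nbij' (i := fun i => i + 1) (j := fun k => k - 1) ?_ ?_ ?_ ?_ ?_ <;>
    (intro a ha; simp only [Finset.mem_Icc, Finset.mem_range] at *) <;> first | omega | rfl
end
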